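/- arXiv:1903.01449 — 11 statements merged into one kernel-verified Lean document; each statement's English description precedes it below -/
import Mathlib

section
/- In the KL-control setting, for every time t ∈ {0,...,T} and every probability vector P on the node set {1,...,V}, the optimal value V_t(P) := inf over all admissible policies {Q_τ}_{τ=t}^{T−1} of Σ_{τ=t}^{T−1} Σ_{i,j} P_τ^i Q_τ^{ij} (C_τ^{ij} + α·log(Q_τ^{ij}/R_τ^{ij})), where P_t = P and P_{τ+1}^j = Σ_i P_τ^i Q_τ^{ij}, equals −α · Σ_{i=1}^V P^i · log φ_t^i. -/
/-!
With `φ_τ^i = Σ_j R_τ^{ij} e^{-C_τ^{ij}/α} φ_{τ+1}^j` playing the role of a partition function,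
Gibbs' inequality gives, for every probability row `q`,
`Σ_j q_j (C_τ^{ij} + α log (q_j / R_τ^{ij})) ≥ α Σ_j q_j log φ_{τ+1}^j - α log φ_τ^i`,
with equality for the Gibbs row `q_j ∝ R_τ^{ij} e^{-C_τ^{ij}/α} φ_{τ+1}^j`. Averaging over
`P_τ`, the cost of stage `τ` is at least `W_τ(P_τ) - W_{τ+1}(P_{τ+1})` for
`W_τ(P) = -α Σ_i P^i log φ_τ^i`. Since `W_T = 0`, the stages telescope to `cost ≥ W_t(P)`,
and the Gibbs policy attains it.
-/

open Finset Real Matrix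

namespace KLControl

variable {ι : Type*} [Fintype ι]

theorem sub_le_mul_log_div {q p : ℝ} (hq : 0 ≤ q) (hp : 0 < p) : q - p ≤ q * log (q / p) := by
  rcases hq.eq_or_lt with rfl | hq
  · simp [hp.le]
  · have hlog : log (q / p) = -log (p / q) := by rw [← log_inv, inv_div]
    have hpq : q * (p / q) = p := mul_div_cancel₀ p hq.ne'
    rw [hlog]
    nlinarith [mul_le_mul_of_nonneg_left (log_le_sub_one_of_pos (div_pos hp hq)) hq.le]

theorem sum_sub_sum_le_sum_mul_log_div {q p : ι → ℝ} (hq : ∀ j, 0 ≤ q j) (hp : ∀ j, 0 < p j) :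
    ∑ j, q j - ∑ j, p j ≤ ∑ j, q j * log (q j / p j) := by
  rw [← sum_sub_distrib]
  exact sum_le_sum fun j _ => sub_le_mul_log_div (hq j) (hp j)

variable (α : ℝ)

noncomputable section

def rowCost (c r q : ι → ℝ) : ℝ := ∑ j, q j * (c j + α * log (q j / r j))

def stageCost (C R Q : ι → ι → ℝ) (P : ι → ℝ) : ℝ :=
  ∑ i, ∑ j, P i * Q i j * (C i j + α * log (Q i j / R i j))

def klValue (φ P : ι → ℝ) : ℝ := -α * ∑ i, P i * log (φ i)

def partitionFn (c r f : ι → ℝ) : ℝ := ∑ j, r j * exp (-c j / α) * f j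

def gibbsRow (c r f : ι → ℝ) (j : ι) : ℝ := r j * exp (-c j / α) * f j / partitionFn α c r f

theorem stageCost_eq_sum_mul_rowCost (C R Q : ι → ι → ℝ) (P : ι → ℝ) :
    stageCost α C R Q P = ∑ i, P i * rowCost α (C i) (R i) (Q i) := by
  simp only [stageCost, rowCost, mul_sum, mul_assoc]

theorem klValue_sub_klValue_vecMul (φ φ' P : ι → ℝ) (Q : ι → ι → ℝ) :
    klValue α φ P - klValue α φ' (P ᵥ* Q)
      = ∑ i, P i * (α * ∑ j, Q i j * log (φ' j) - α * log (φ i)) := by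
  have hnext : ∑ j, (P ᵥ* Q) j * log (φ' j) = ∑ i, P i * ∑ j, Q i j * log (φ' j) := by
    simp only [vecMul, dotProduct, sum_mul, mul_sum, mul_assoc]
    exact sum_comm
  calc klValue α φ P - klValue α φ' (P ᵥ* Q)
      = α * ∑ i, P i * ∑ j, Q i j * log (φ' j) - α * ∑ i, P i * log (φ i) := by
        rw [klValue, klValue, hnext]; ring
    _ = _ := by
        rw [mul_sum, mul_sum, ← sum_sub_distrib]
        exact sum_congr rfl fun i _ => by ring

section Row

variable {α} {c r f : ι → ℝ}

theorem partitionFn_pos [Nonempty ι] (hr : ∀ j, 0 < r j) (hf : ∀ j, 0 < f j) :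
    0 < partitionFn α c r f :=
  sum_pos (fun j _ => by have := hr j; have := hf j; positivity) univ_nonempty

theorem gibbsRow_pos [Nonempty ι] (hr : ∀ j, 0 < r j) (hf : ∀ j, 0 < f j) (j : ι) :
    0 < gibbsRow α c r f j := by
  have := hr j; have := hf j; have := partitionFn_pos (α := α) (c := c) hr hf
  unfold gibbsRow; positivity

theorem sum_gibbsRow [Nonempty ι] (hr : ∀ j, 0 < r j) (hf : ∀ j, 0 < f j) :
    ∑ j, gibbsRow α c r f j = 1 := by
  unfold gibbsRow
  rw [← sum_div]
  exact div_self (partitionFn_pos hr hf).ne'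

theorem add_mul_log_gibbsRow_div [Nonempty ι] (hα : α ≠ 0) (hr : ∀ j, 0 < r j)
    (hf : ∀ j, 0 < f j) (j : ι) :
    c j + α * log (gibbsRow α c r f j / r j) = α * log (f j) - α * log (partitionFn α c r f) := by
  have hZ := partitionFn_pos (α := α) (c := c) hr hf
  have hdiv : gibbsRow α c r f j / r j = exp (-c j / α) * f j / partitionFn α c r f := by
    unfold gibbsRow; field_simp [(hr j).ne']
  rw [hdiv, log_div (by have := hf j; positivity) hZ.ne', log_mul (exp_pos _).ne' (hf j).ne',
    log_exp]
  field_simp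
  ring

theorem rowCost_gibbsRow [Nonempty ι] (hα : α ≠ 0) (hr : ∀ j, 0 < r j) (hf : ∀ j, 0 < f j) :
    rowCost α c r (gibbsRow α c r f)
      = α * ∑ j, gibbsRow α c r f j * log (f j) - α * log (partitionFn α c r f) := by
  unfold rowCost
  simp_rw [add_mul_log_gibbsRow_div hα hr hf, mul_sub, sum_sub_distrib, ← sum_mul,
    sum_gibbsRow hr hf, one_mul, mul_sum]
  exact congrArg (· - _) (sum_congr rfl fun j _ => mul_left_comm _ _ _)

theorem le_rowCost [Nonempty ι] (hα : 0 < α) (hr : ∀ j, 0 < r j) (hf : ∀ j, 0 < f j)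
    {q : ι → ℝ} (hq : ∀ j, 0 ≤ q j) (hq1 : ∑ j, q j = 1) :
    α * ∑ j, q j * log (f j) - α * log (partitionFn α c r f) ≤ rowCost α c r q := by
  set g := gibbsRow α c r f
  have hg : ∀ j, 0 < g j := gibbsRow_pos hr hf
  have hsplit : ∀ j, q j * (c j + α * log (q j / r j))
      = q j * (α * log (f j) - α * log (partitionFn α c r f)) + α * (q j * log (q j / g j)) := by
    intro j
    rcases (hq j).eq_or_lt with hqj | hqj
    · simp [← hqj]
    · rw [← add_mul_log_gibbsRow_div hα.ne' hr hf, ← div_mul_div_cancel₀ (hg j).ne',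
        log_mul (div_pos hqj (hg j)).ne' (div_pos (hg j) (hr j)).ne']
      ring
  have hgibbs : 0 ≤ ∑ j, q j * log (q j / g j) := by
    have := sum_sub_sum_le_sum_mul_log_div hq hg
    rwa [hq1, sum_gibbsRow hr hf, sub_self] at this
  calc α * ∑ j, q j * log (f j) - α * log (partitionFn α c r f)
      ≤ α * ∑ j, q j * log (f j) - α * log (partitionFn α c r f)
          + α * ∑ j, q j * log (q j / g j) := le_add_of_nonneg_right (by positivity)
    _ = rowCost α c r q := by
      simp_rw [rowCost, hsplit, sum_add_distrib, mul_sub, sum_sub_distrib, ← sum_mul, hq1,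
        one_mul, mul_sum]
      exact congrArg (· - _ + _) (sum_congr rfl fun j _ => mul_left_comm _ _ _)

end Row

section Stage

variable {α} {C R : ι → ι → ℝ} {φ' : ι → ℝ}

theorem klValue_sub_le_stageCost (hα : 0 < α) (hR : ∀ i j, 0 < R i j) (hφ' : ∀ j, 0 < φ' j)
    {P : ι → ℝ} {Q : ι → ι → ℝ} (hP : ∀ i, 0 ≤ P i) (hQ : ∀ i j, 0 ≤ Q i j)
    (hQ1 : ∀ i, ∑ j, Q i j = 1) :
    klValue α (fun i => partitionFn α (C i) (R i) φ') P - klValue α φ' (P ᵥ* Q)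
      ≤ stageCost α C R Q P := by
  rw [klValue_sub_klValue_vecMul, stageCost_eq_sum_mul_rowCost]
  refine sum_le_sum fun i _ => mul_le_mul_of_nonneg_left ?_ (hP i)
  have : Nonempty ι := ⟨i⟩
  exact le_rowCost hα (hR i) hφ' (hQ i) (hQ1 i)

theorem stageCost_gibbsRow (hα : α ≠ 0) (hR : ∀ i j, 0 < R i j) (hφ' : ∀ j, 0 < φ' j)
    (P : ι → ℝ) :
    stageCost α C R (fun i => gibbsRow α (C i) (R i) φ') P
      = klValue α (fun i => partitionFn α (C i) (R i) φ') P
        - klValue α φ' (P ᵥ* fun i => gibbsRow α (C i) (R i) φ') := by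
  rw [klValue_sub_klValue_vecMul, stageCost_eq_sum_mul_rowCost]
  refine sum_congr rfl fun i _ => ?_
  have : Nonempty ι := ⟨i⟩
  rw [rowCost_gibbsRow hα (hR i) hφ']

end Stage

theorem sum_Ico_sub_succ (f : ℕ → ℝ) {t T : ℕ} (ht : t ≤ T) :
    ∑ τ ∈ Ico t T, (f τ - f (τ + 1)) = f t - f T := by
  rw [← neg_sub, ← sum_Ico_sub f ht, ← sum_neg_distrib]
  simp only [neg_sub]

def gibbsPolicy (C R : ℕ → ι → ι → ℝ) (φ : ℕ → ι → ℝ) (τ : ℕ) (i : ι) : ι → ℝ :=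
  gibbsRow α (C τ i) (R τ i) (φ (τ + 1))

/-- `evolve Q t P₀ n` is the distribution at time `t + n` started from `P₀` at time `t`. -/
def evolve (Q : ℕ → ι → ι → ℝ) (t : ℕ) (P₀ : ι → ℝ) : ℕ → ι → ℝ
  | 0 => P₀
  | n + 1 => evolve Q t P₀ n ᵥ* Q (t + n)

theorem evolve_sub_succ (Q : ℕ → ι → ι → ℝ) (P₀ : ι → ℝ) {t τ : ℕ} (h : t ≤ τ) :
    evolve Q t P₀ (τ + 1 - t) = evolve Q t P₀ (τ - t) ᵥ* Q τ := by
  rw [show τ + 1 - t = τ - t + 1 by omega, evolve, Nat.add_sub_cancel' h]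

theorem nonneg_of_eq_vecMul {P : ℕ → ι → ℝ} {Q : ℕ → ι → ι → ℝ} {t T : ℕ}
    (hP : ∀ τ, t ≤ τ → τ < T → P (τ + 1) = P τ ᵥ* Q τ)
    (hQ : ∀ τ, t ≤ τ → τ < T → ∀ i j, 0 ≤ Q τ i j) (hPt : ∀ i, 0 ≤ P t i)
    {τ : ℕ} (hτ : t ≤ τ) (hτT : τ ≤ T) (j : ι) : 0 ≤ P τ j := by
  induction τ, hτ using Nat.le_induction generalizing j with
  | base => exact hPt j
  | succ τ hτ ih =>
    rw [hP τ hτ hτT]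
    exact sum_nonneg fun i _ => mul_nonneg (ih (by omega) i) (hQ τ hτ hτT i j)

section Horizon

variable {α} {T : ℕ} {C R : ℕ → ι → ι → ℝ} {φ : ℕ → ι → ℝ}

theorem pos_of_partitionFn_eq (hR : ∀ τ, τ < T → ∀ i j, 0 < R τ i j) (hφT : ∀ i, φ T i = 1)
    (hφ : ∀ τ, τ < T → ∀ i, φ τ i = partitionFn α (C τ i) (R τ i) (φ (τ + 1)))
    {τ : ℕ} (hτ : τ ≤ T) (i : ι) : 0 < φ τ i := by
  induction hτ using Nat.decreasingInduction generalizing i with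
  | self => rw [hφT]; exact one_pos
  | of_succ τ hτ ih =>
    have : Nonempty ι := ⟨i⟩
    rw [hφ τ hτ i]
    exact partitionFn_pos (hR τ hτ i) ih

theorem gibbsPolicy_pos (hR : ∀ τ, τ < T → ∀ i j, 0 < R τ i j) (hφT : ∀ i, φ T i = 1)
    (hφ : ∀ τ, τ < T → ∀ i, φ τ i = partitionFn α (C τ i) (R τ i) (φ (τ + 1)))
    {τ : ℕ} (hτ : τ < T) (i j : ι) : 0 < gibbsPolicy α C R φ τ i j :=
  have : Nonempty ι := ⟨i⟩
  gibbsRow_pos (hR τ hτ i) (pos_of_partitionFn_eq hR hφT hφ hτ) j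

theorem sum_gibbsPolicy (hR : ∀ τ, τ < T → ∀ i j, 0 < R τ i j) (hφT : ∀ i, φ T i = 1)
    (hφ : ∀ τ, τ < T → ∀ i, φ τ i = partitionFn α (C τ i) (R τ i) (φ (τ + 1)))
    {τ : ℕ} (hτ : τ < T) (i : ι) : ∑ j, gibbsPolicy α C R φ τ i j = 1 :=
  have : Nonempty ι := ⟨i⟩
  sum_gibbsRow (hR τ hτ i) (pos_of_partitionFn_eq hR hφT hφ hτ)

theorem klValue_le_sum_stageCost (hα : 0 < α) (hR : ∀ τ, τ < T → ∀ i j, 0 < R τ i j)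
    (hφT : ∀ i, φ T i = 1)
    (hφ : ∀ τ, τ < T → ∀ i, φ τ i = partitionFn α (C τ i) (R τ i) (φ (τ + 1)))
    {t : ℕ} (ht : t ≤ T) {Q : ℕ → ι → ι → ℝ} {P : ℕ → ι → ℝ}
    (hQ : ∀ τ, t ≤ τ → τ < T → ∀ i j, 0 ≤ Q τ i j)
    (hQ1 : ∀ τ, t ≤ τ → τ < T → ∀ i, ∑ j, Q τ i j = 1)
    (hP : ∀ τ, t ≤ τ → τ < T → P (τ + 1) = P τ ᵥ* Q τ) (hPt : ∀ i, 0 ≤ P t i) :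
    klValue α (φ t) (P t) ≤ ∑ τ ∈ Ico t T, stageCost α (C τ) (R τ) (Q τ) (P τ) := by
  have hstep : ∀ τ ∈ Ico t T, klValue α (φ τ) (P τ) - klValue α (φ (τ + 1)) (P (τ + 1))
      ≤ stageCost α (C τ) (R τ) (Q τ) (P τ) := by
    intro τ hτ
    obtain ⟨htτ, hτT⟩ := mem_Ico.1 hτ
    rw [hP τ htτ hτT, show φ τ = _ from funext (hφ τ hτT)]
    exact klValue_sub_le_stageCost hα (hR τ hτT) (pos_of_partitionFn_eq hR hφT hφ hτT)
      (nonneg_of_eq_vecMul hP hQ hPt htτ hτT.le) (hQ τ htτ hτT) (hQ1 τ htτ hτT)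
  have hT : klValue α (φ T) (P T) = 0 := by simp [klValue, hφT]
  simpa [sum_Ico_sub_succ _ ht, hT] using sum_le_sum hstep

theorem sum_stageCost_gibbsPolicy (hα : α ≠ 0) (hR : ∀ τ, τ < T → ∀ i j, 0 < R τ i j)
    (hφT : ∀ i, φ T i = 1)
    (hφ : ∀ τ, τ < T → ∀ i, φ τ i = partitionFn α (C τ i) (R τ i) (φ (τ + 1)))
    {t : ℕ} (ht : t ≤ T) (P₀ : ι → ℝ) :
    ∑ τ ∈ Ico t T, stageCost α (C τ) (R τ) (gibbsPolicy α C R φ τ)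
        (evolve (gibbsPolicy α C R φ) t P₀ (τ - t))
      = klValue α (φ t) P₀ := by
  set P := fun τ => evolve (gibbsPolicy α C R φ) t P₀ (τ - t)
  have hstep : ∀ τ ∈ Ico t T, stageCost α (C τ) (R τ) (gibbsPolicy α C R φ τ) (P τ)
      = klValue α (φ τ) (P τ) - klValue α (φ (τ + 1)) (P (τ + 1)) := by
    intro τ hτ
    obtain ⟨htτ, hτT⟩ := mem_Ico.1 hτ
    rw [show P (τ + 1) = P τ ᵥ* gibbsPolicy α C R φ τ from evolve_sub_succ _ _ htτ,
      show φ τ = _ from funext (hφ τ hτT)]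
    exact stageCost_gibbsRow hα (hR τ hτT) (pos_of_partitionFn_eq hR hφT hφ hτT) _
  have hT : klValue α (φ T) (P T) = 0 := by simp [klValue, hφT]
  rw [sum_congr rfl hstep, sum_Ico_sub_succ _ ht, hT, sub_zero]
  simp [P, evolve]

end Horizon

end

end KLControl

open KLControl

theorem stmt_0_general
    (V T : ℕ)
    (α : ℝ) (hα : 0 < α)
    (C R : ℕ → Fin V → Fin V → ℝ)
    (hRpos : ∀ t, t < T → ∀ i j, 0 < R t i j)
    (φ : ℕ → Fin V → ℝ)
    (hφT : ∀ i, φ T i = 1)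
    (hφ : ∀ t, t < T → ∀ i,
      φ t i = ∑ j, R t i j * Real.exp (-(C t i j) / α) * φ (t + 1) j)
    (t : ℕ) (ht : t ≤ T)
    (P0 : Fin V → ℝ) (hP0 : ∀ i, 0 ≤ P0 i) :
    IsGLB
      { c : ℝ | ∃ (Q : ℕ → Fin V → Fin V → ℝ) (P : ℕ → Fin V → ℝ),
          (∀ τ, t ≤ τ → τ < T → ∀ i j, 0 ≤ Q τ i j) ∧
          (∀ τ, t ≤ τ → τ < T → ∀ i, ∑ j, Q τ i j = 1) ∧
          P t = P0 ∧
          (∀ τ, t ≤ τ → τ < T → ∀ j, P (τ + 1) j = ∑ i, P τ i * Q τ i j) ∧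
          c = ∑ τ ∈ Finset.Ico t T, ∑ i, ∑ j,
                P τ i * Q τ i j *
                  (C τ i j + α * Real.log (Q τ i j / R τ i j)) }
      (-α * ∑ i, P0 i * Real.log (φ t i)) := by
  constructor
  · rintro c ⟨Q, P, hQ, hQ1, hPt, hP, rfl⟩
    have := klValue_le_sum_stageCost hα hRpos hφT hφ ht hQ hQ1
      (fun τ htτ hτT => funext (hP τ htτ hτT)) (hPt ▸ hP0)
    rwa [hPt] at this
  · intro b hb
    refine hb ⟨gibbsPolicy α C R φ, fun τ => evolve (gibbsPolicy α C R φ) t P0 (τ - t),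
      fun τ _ hτT i j => (gibbsPolicy_pos hRpos hφT hφ hτT i j).le,
      fun τ _ hτT => sum_gibbsPolicy hRpos hφT hφ hτT, by simp [evolve],
      fun τ htτ _ j => congrFun (evolve_sub_succ _ _ htτ) j,
      (sum_stageCost_gibbsPolicy hα.ne' hRpos hφT hφ ht P0).symm⟩

theorem stmt_0
    (V T : ℕ) (hV : 1 ≤ V) (hT : 1 ≤ T)
    (α : ℝ) (hα : 0 < α)
    (C R : ℕ → Fin V → Fin V → ℝ)
    (hRpos : ∀ t, t < T → ∀ i j, 0 < R t i j)
    (hRsum : ∀ t, t < T → ∀ i, ∑ j, R t i j = 1)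
    (φ : ℕ → Fin V → ℝ)
    (hφT : ∀ i, φ T i = 1)
    (hφ : ∀ t, t < T → ∀ i,
      φ t i = ∑ j, R t i j * Real.exp (-(C t i j) / α) * φ (t + 1) j)
    (t : ℕ) (ht : t ≤ T)
    (P0 : Fin V → ℝ) (hP0 : ∀ i, 0 ≤ P0 i) (hP0sum : ∑ i, P0 i = 1) :
    IsGLB
      { c : ℝ | ∃ (Q : ℕ → Fin V → Fin V → ℝ) (P : ℕ → Fin V → ℝ),
          (∀ τ, t ≤ τ → τ < T → ∀ i j, 0 ≤ Q τ i j) ∧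
          (∀ τ, t ≤ τ → τ < T → ∀ i, ∑ j, Q τ i j = 1) ∧
          P t = P0 ∧
          (∀ τ, t ≤ τ → τ < T → ∀ j, P (τ + 1) j = ∑ i, P τ i * Q τ i j) ∧
          c = ∑ τ ∈ Finset.Ico t T, ∑ i, ∑ j,
                P τ i * Q τ i j *
                  (C τ i j + α * Real.log (Q τ i j / R τ i j)) }
      (-α * ∑ i, P0 i * Real.log (φ t i)) :=
  stmt_0_general V T α hα C R hRpos φ hφT hφ t ht P0 hP0
end

section
/- In the KL-control setting, the policy Q* defined by Q*_t^{ij} = (φ_{t+1}^j/φ_t^i) · R_t^{ij} · exp(−C_t^{ij}/α) is an admissible policy (its entries are nonnegative and each row sums to one), and for every time t ∈ {0,...,T−1} and every initial probability vector P_t it attains the optimal value: Σ_{τ=t}^{T−1} Σ_{i,j} P_τ^i Q*_τ^{ij} (C_τ^{ij} + α·log(Q*_τ^{ij}/R_τ^{ij})) = −α · Σ_i P_t^i · log φ_t^i, where P_{τ+1}^j = Σ_i P_τ^i Q*_τ^{ij}; in particular this value is a lower bound for the cost of every admissible policy started from P_t. -/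
/-!
STATEMENT 1: In the KL-control setting, the policy
`Q*_t^{ij} = (φ_{t+1}^j/φ_t^i) · R_t^{ij} · exp(−C_t^{ij}/α)` is admissible, attains the
optimal value `−α Σ_i P_t^i log φ_t^i` from every time `t` and initial distribution `P_t`,
and this value is a lower bound for the cost of every admissible policy started from `P_t`.
-/

private lemma tele_sum (f : ℕ → ℝ) {t T : ℕ} (h : t ≤ T) :
    ∑ τ ∈ Finset.Ico t T, (f (τ + 1) - f τ) = f T - f t := by
  induction T, h using Nat.le_induction with
  | base => simp
  | succ n hn ih => rw [Finset.sum_Ico_succ_top hn, ih]; ring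

private lemma gibbs_ineq {V : ℕ} (hV : 0 < V) (Q M : Fin V → ℝ)
    (hQ : ∀ j, 0 ≤ Q j) (hQs : ∑ j, Q j = 1) (hM : ∀ j, 0 < M j) :
    -Real.log (∑ j, M j) ≤ ∑ j, Q j * Real.log (Q j / M j) := by
  haveI : Nonempty (Fin V) := ⟨⟨0, hV⟩⟩
  set s := ∑ j, M j with hs
  have hspos : 0 < s := Finset.sum_pos (fun j _ => hM j) Finset.univ_nonempty
  have key : ∀ j, Q j - M j / s - Q j * Real.log s ≤ Q j * Real.log (Q j / M j) := by
    intro j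
    rcases eq_or_lt_of_le (hQ j) with h0 | h0
    · rw [← h0]
      have h1 : 0 < M j / s := div_pos (hM j) hspos
      simp
      linarith
    · have hlog := Real.log_le_sub_one_of_pos
        (show 0 < M j / (Q j * s) from div_pos (hM j) (mul_pos h0 hspos))
      have hrw : Real.log (M j / (Q j * s)) = Real.log (M j) - (Real.log (Q j) + Real.log s) := by
        rw [Real.log_div (hM j).ne' (mul_ne_zero h0.ne' hspos.ne'),
          Real.log_mul h0.ne' hspos.ne']
      have hrw2 : Real.log (Q j / M j) = Real.log (Q j) - Real.log (M j) :=
        Real.log_div h0.ne' (hM j).ne'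
      rw [hrw] at hlog
      have hfl : Q j * (M j / (Q j * s)) = M j / s := by field_simp
      nlinarith [mul_le_mul_of_nonneg_left hlog (hQ j)]
  have hsum := Finset.sum_le_sum (fun j (_ : j ∈ Finset.univ) => key j)
  have h1 : ∑ j, (Q j - M j / s - Q j * Real.log s) = -Real.log s := by
    rw [Finset.sum_sub_distrib, Finset.sum_sub_distrib, hQs, ← Finset.sum_div,
      ← Finset.sum_mul, hQs, ← hs]
    field_simp
    ring
  rw [h1] at hsum
  exact hsum

theorem stmt_1
    (V T : ℕ) (hV : 1 ≤ V) (hT : 1 ≤ T)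
    (α : ℝ) (hα : 0 < α)
    (C R : ℕ → Fin V → Fin V → ℝ)
    (hRpos : ∀ t, t < T → ∀ i j, 0 < R t i j)
    (hRsum : ∀ t, t < T → ∀ i, ∑ j, R t i j = 1)
    (φ : ℕ → Fin V → ℝ)
    (hφT : ∀ i, φ T i = 1)
    (hφ : ∀ t, t < T → ∀ i,
      φ t i = ∑ j, R t i j * Real.exp (-(C t i j) / α) * φ (t + 1) j)
    (Qstar : ℕ → Fin V → Fin V → ℝ)
    (hQstar : ∀ t, t < T → ∀ i j,
      Qstar t i j = φ (t + 1) j / φ t i * R t i j * Real.exp (-(C t i j) / α)) :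
    -- Q* is an admissible policy
    ((∀ t, t < T → ∀ i j, 0 ≤ Qstar t i j) ∧
     (∀ t, t < T → ∀ i, ∑ j, Qstar t i j = 1)) ∧
    -- from every time t and initial distribution, Q* attains the optimal value,
    -- which lower-bounds the cost of every admissible policy
    (∀ t, t < T → ∀ P0 : Fin V → ℝ, (∀ i, 0 ≤ P0 i) → ∑ i, P0 i = 1 →
      (∀ Pstar : ℕ → Fin V → ℝ, Pstar t = P0 →
        (∀ τ, t ≤ τ → τ < T → ∀ j, Pstar (τ + 1) j = ∑ i, Pstar τ i * Qstar τ i j) →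
        ∑ τ ∈ Finset.Ico t T, ∑ i, ∑ j,
            Pstar τ i * Qstar τ i j *
              (C τ i j + α * Real.log (Qstar τ i j / R τ i j))
          = -α * ∑ i, P0 i * Real.log (φ t i)) ∧
      (∀ (Q : ℕ → Fin V → Fin V → ℝ) (P : ℕ → Fin V → ℝ),
        (∀ τ, t ≤ τ → τ < T → ∀ i j, 0 ≤ Q τ i j) →
        (∀ τ, t ≤ τ → τ < T → ∀ i, ∑ j, Q τ i j = 1) →
        P t = P0 →
        (∀ τ, t ≤ τ → τ < T → ∀ j, P (τ + 1) j = ∑ i, P τ i * Q τ i j) →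
        -α * ∑ i, P0 i * Real.log (φ t i) ≤
          ∑ τ ∈ Finset.Ico t T, ∑ i, ∑ j,
            P τ i * Q τ i j * (C τ i j + α * Real.log (Q τ i j / R τ i j)))) := by
  have hα' : α ≠ 0 := ne_of_gt hα
  -- positivity of φ
  have hφpos : ∀ s, s ≤ T → ∀ i, 0 < φ s i := by
    have key : ∀ k, ∀ i, 0 < φ (T - k) i := by
      intro k
      induction k with
      | zero => intro i; rw [Nat.sub_zero, hφT i]; norm_num
      | succ k ih =>
        intro i
        by_cases h : k + 1 ≤ T
        · have ht : T - (k + 1) < T := by omega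
          have heq : T - (k + 1) + 1 = T - k := by omega
          rw [hφ _ ht i]
          refine Finset.sum_pos (fun j _ => ?_) ⟨⟨0, by omega⟩, Finset.mem_univ _⟩
          have h2 : 0 < φ (T - (k + 1) + 1) j := by rw [heq]; exact ih j
          exact mul_pos (mul_pos (hRpos _ ht i j) (Real.exp_pos _)) h2
        · have h2 : T - (k + 1) = T - k := by omega
          rw [h2]; exact ih i
    intro s hs i
    have := key (T - s) i
    rwa [Nat.sub_sub_self hs] at this
  have hQnn : ∀ t, t < T → ∀ i j, 0 ≤ Qstar t i j := by
    intro t ht i j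
    rw [hQstar t ht i j]
    exact mul_nonneg (mul_nonneg
      (div_nonneg (hφpos (t + 1) ht j).le (hφpos t ht.le i).le)
      (hRpos t ht i j).le) (Real.exp_pos _).le
  have hQsum : ∀ t, t < T → ∀ i, ∑ j, Qstar t i j = 1 := by
    intro t ht i
    have hpos := hφpos t ht.le i
    calc ∑ j, Qstar t i j
        = ∑ j, R t i j * Real.exp (-(C t i j) / α) * φ (t + 1) j / φ t i := by
          refine Finset.sum_congr rfl fun j _ => ?_
          rw [hQstar t ht i j]; ring
      _ = (∑ j, R t i j * Real.exp (-(C t i j) / α) * φ (t + 1) j) / φ t i :=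
          (Finset.sum_div _ _ _).symm
      _ = 1 := by rw [← hφ t ht i]; field_simp
  refine ⟨⟨hQnn, hQsum⟩, ?_⟩
  intro t ht P0 hP0 hP0s
  constructor
  · -- equality: Q* attains the optimal value
    intro Pstar hPt hPrec
    have step : ∀ τ ∈ Finset.Ico t T,
        ∑ i, ∑ j, Pstar τ i * Qstar τ i j *
            (C τ i j + α * Real.log (Qstar τ i j / R τ i j))
        = (fun τ => α * ∑ i, Pstar τ i * Real.log (φ τ i)) (τ + 1)
          - (fun τ => α * ∑ i, Pstar τ i * Real.log (φ τ i)) τ := by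
      intro τ hτ
      rw [Finset.mem_Ico] at hτ
      obtain ⟨hτ1, hτ2⟩ := hτ
      simp only
      have hterm : ∀ i j,
          Pstar τ i * Qstar τ i j * (C τ i j + α * Real.log (Qstar τ i j / R τ i j))
          = Pstar τ i * Qstar τ i j * (α * Real.log (φ (τ + 1) j))
            - Pstar τ i * (α * Real.log (φ τ i)) * Qstar τ i j := by
        intro i j
        have hr := hRpos τ hτ2 i j
        have h1 := hφpos τ hτ2.le i
        have h2 := hφpos (τ + 1) hτ2 j
        have hQR : Qstar τ i j / R τ i j
            = φ (τ + 1) j / φ τ i * Real.exp (-(C τ i j) / α) := by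
          rw [hQstar τ hτ2 i j]
          field_simp
        rw [hQR, Real.log_mul (div_pos h2 h1).ne' (Real.exp_ne_zero _),
          Real.log_div h2.ne' h1.ne', Real.log_exp]
        field_simp
        ring
      calc ∑ i, ∑ j, Pstar τ i * Qstar τ i j *
              (C τ i j + α * Real.log (Qstar τ i j / R τ i j))
          = ∑ i, ∑ j, (Pstar τ i * Qstar τ i j * (α * Real.log (φ (τ + 1) j))
              - Pstar τ i * (α * Real.log (φ τ i)) * Qstar τ i j) :=
            Finset.sum_congr rfl fun i _ => Finset.sum_congr rfl fun j _ => hterm i j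
        _ = (∑ i, ∑ j, Pstar τ i * Qstar τ i j * (α * Real.log (φ (τ + 1) j)))
            - ∑ i, ∑ j, Pstar τ i * (α * Real.log (φ τ i)) * Qstar τ i j := by
            rw [← Finset.sum_sub_distrib]
            exact Finset.sum_congr rfl fun i _ => Finset.sum_sub_distrib _ _
        _ = α * ∑ i, Pstar (τ + 1) i * Real.log (φ (τ + 1) i)
            - α * ∑ i, Pstar τ i * Real.log (φ τ i) := by
            congr 1
            · rw [Finset.sum_comm, Finset.mul_sum]
              refine Finset.sum_congr rfl fun j _ => ?_
              rw [← Finset.sum_mul, ← hPrec τ hτ1 hτ2 j]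
              ring
            · rw [Finset.mul_sum]
              refine Finset.sum_congr rfl fun i _ => ?_
              rw [← Finset.mul_sum, hQsum τ hτ2 i]
              ring
    rw [Finset.sum_congr rfl step,
      tele_sum (fun τ => α * ∑ i, Pstar τ i * Real.log (φ τ i)) ht.le]
    have hgT : ∑ i, Pstar T i * Real.log (φ T i) = 0 := by simp [hφT]
    rw [hgT, hPt]
    ring
  · -- lower bound for every admissible policy
    intro Q P hQnn' hQrow hPt hPrec
    have hPnn : ∀ τ, t ≤ τ → ∀ i, τ ≤ T → 0 ≤ P τ i := by
      intro τ hτ1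
      induction τ, hτ1 using Nat.le_induction with
      | base => intro i _; rw [hPt]; exact hP0 i
      | succ n hn ih =>
        intro i hle
        rw [hPrec n hn (by omega) i]
        exact Finset.sum_nonneg fun j _ =>
          mul_nonneg (ih j (by omega)) (hQnn' n hn (by omega) j i)
    have step : ∀ τ ∈ Finset.Ico t T,
        (fun τ => α * ∑ i, P τ i * Real.log (φ τ i)) (τ + 1)
          - (fun τ => α * ∑ i, P τ i * Real.log (φ τ i)) τ
        ≤ ∑ i, ∑ j, P τ i * Q τ i j *
            (C τ i j + α * Real.log (Q τ i j / R τ i j)) := by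
      intro τ hτ
      rw [Finset.mem_Ico] at hτ
      obtain ⟨hτ1, hτ2⟩ := hτ
      simp only
      have hL : α * ∑ i, P (τ + 1) i * Real.log (φ (τ + 1) i)
          - α * ∑ i, P τ i * Real.log (φ τ i)
          = ∑ i, P τ i * ((α * ∑ j, Q τ i j * Real.log (φ (τ + 1) j))
              - α * Real.log (φ τ i)) := by
        have e1 : ∑ i, P (τ + 1) i * Real.log (φ (τ + 1) i)
            = ∑ i, P τ i * ∑ j, Q τ i j * Real.log (φ (τ + 1) j) := by
          calc ∑ j, P (τ + 1) j * Real.log (φ (τ + 1) j)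
              = ∑ j, (∑ i, P τ i * Q τ i j) * Real.log (φ (τ + 1) j) :=
                Finset.sum_congr rfl fun j _ => by rw [hPrec τ hτ1 hτ2 j]
            _ = ∑ j, ∑ i, P τ i * (Q τ i j * Real.log (φ (τ + 1) j)) := by
                refine Finset.sum_congr rfl fun j _ => ?_
                rw [Finset.sum_mul]
                exact Finset.sum_congr rfl fun i _ => by ring
            _ = ∑ i, ∑ j, P τ i * (Q τ i j * Real.log (φ (τ + 1) j)) := Finset.sum_comm
            _ = ∑ i, P τ i * ∑ j, Q τ i j * Real.log (φ (τ + 1) j) :=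
                Finset.sum_congr rfl fun i _ => (Finset.mul_sum _ _ _).symm
        rw [e1, Finset.mul_sum, Finset.mul_sum, ← Finset.sum_sub_distrib]
        exact Finset.sum_congr rfl fun i _ => by ring
      have hR' : ∑ i, ∑ j, P τ i * Q τ i j *
              (C τ i j + α * Real.log (Q τ i j / R τ i j))
          = ∑ i, P τ i * ∑ j, Q τ i j *
              (C τ i j + α * Real.log (Q τ i j / R τ i j)) := by
        refine Finset.sum_congr rfl fun i _ => ?_
        rw [Finset.mul_sum]
        exact Finset.sum_congr rfl fun j _ => by ring
      rw [hL, hR']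
      refine Finset.sum_le_sum fun i _ => ?_
      refine mul_le_mul_of_nonneg_left ?_ (hPnn τ hτ1 i hτ2.le)
      -- per-state Gibbs inequality
      set M : Fin V → ℝ := fun j => R τ i j * Real.exp (-(C τ i j) / α) * φ (τ + 1) j
        with hM
      have hMpos : ∀ j, 0 < M j := fun j =>
        mul_pos (mul_pos (hRpos τ hτ2 i j) (Real.exp_pos _)) (hφpos (τ + 1) hτ2 j)
      have hMsum : ∑ j, M j = φ τ i := (hφ τ hτ2 i).symm
      have hgibbs := gibbs_ineq hV (fun j => Q τ i j) M
        (fun j => hQnn' τ hτ1 hτ2 i j) (hQrow τ hτ1 hτ2 i) hMpos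
      rw [hMsum] at hgibbs
      have hkey : ∑ j, Q τ i j * (C τ i j + α * Real.log (Q τ i j / R τ i j))
          - α * ∑ j, Q τ i j * Real.log (φ (τ + 1) j)
          = α * ∑ j, Q τ i j * Real.log (Q τ i j / M j) := by
        rw [Finset.mul_sum, Finset.mul_sum, ← Finset.sum_sub_distrib]
        refine Finset.sum_congr rfl fun j _ => ?_
        rcases eq_or_lt_of_le (hQnn' τ hτ1 hτ2 i j) with h0 | h0
        · rw [← h0]; simp
        · have hr := hRpos τ hτ2 i j
          have h2 := hφpos (τ + 1) hτ2 j
          rw [Real.log_div h0.ne' (hMpos j).ne', Real.log_div h0.ne' hr.ne']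
          simp only [hM]
          rw [Real.log_mul (mul_ne_zero hr.ne' (Real.exp_ne_zero _)) h2.ne',
            Real.log_mul hr.ne' (Real.exp_ne_zero _), Real.log_exp]
          field_simp
          ring
      have := mul_le_mul_of_nonneg_left hgibbs hα.le
      linarith [this, hkey]
    have htot := Finset.sum_le_sum step
    rw [tele_sum (fun τ => α * ∑ i, P τ i * Real.log (φ τ i)) ht.le] at htot
    have hgT : ∑ i, P T i * Real.log (φ T i) = 0 := by simp [hφT]
    rw [hgT, hPt] at htot
    calc -α * ∑ i, P0 i * Real.log (φ t i)
        = α * 0 - α * ∑ i, P0 i * Real.log (φ t i) := by ring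
      _ ≤ _ := htot
end

section
/- In the KL-control setting (equalizer property): for every time t ∈ {0,...,T−1}, every probability vector P_t on the node set, and every admissible policy {Q_τ}_{τ=t}^{T−1} with induced distributions P_{τ+1}^j = Σ_i P_τ^i Q_τ^{ij}, one has Σ_{τ=t}^{T−1} Σ_{i,j} P_τ^i Q_τ^{ij} ( C_τ^{ij} + α·log(Q*_τ^{ij}/R_τ^{ij}) ) = −α · Σ_i P_t^i · log φ_t^i. In particular, this quantity does not depend on the chosen policy {Q_τ}: every admissible policy yields the same cost when the logarithmic term is evaluated at the fixed policy Q*. -/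
/-!
STATEMENT 3 (equalizer property): In the KL-control setting, for every time `t`,
probability vector `P_t`, and admissible policy `{Q_τ}` with induced distributions,
`Σ_{τ=t}^{T−1} Σ_{i,j} P_τ^i Q_τ^{ij} (C_τ^{ij} + α log(Q*_τ^{ij}/R_τ^{ij}))
 = −α Σ_i P_t^i log φ_t^i`, independently of the chosen policy.
-/

/-- Telescoping sum over `Ico`. -/
lemma telescope_Ico (f : ℕ → ℝ) (m n : ℕ) (h : m ≤ n) :
    ∑ i ∈ Finset.Ico m n, (f (i + 1) - f i) = f n - f m := by
  induction n, h using Nat.le_induction with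
  | base => simp
  | succ n hn ih =>
    rw [Finset.sum_Ico_succ_top (by omega), ih]
    ring

theorem stmt_3
    (V T : ℕ) (hV : 1 ≤ V) (hT : 1 ≤ T)
    (α : ℝ) (hα : 0 < α)
    (C R : ℕ → Fin V → Fin V → ℝ)
    (hRpos : ∀ t, t < T → ∀ i j, 0 < R t i j)
    (hRsum : ∀ t, t < T → ∀ i, ∑ j, R t i j = 1)
    (φ : ℕ → Fin V → ℝ)
    (hφT : ∀ i, φ T i = 1)
    (hφ : ∀ t, t < T → ∀ i,
      φ t i = ∑ j, R t i j * Real.exp (-(C t i j) / α) * φ (t + 1) j)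
    (Qstar : ℕ → Fin V → Fin V → ℝ)
    (hQstar : ∀ t, t < T → ∀ i j,
      Qstar t i j = φ (t + 1) j / φ t i * R t i j * Real.exp (-(C t i j) / α))
    (t : ℕ) (ht : t < T)
    (P0 : Fin V → ℝ) (hP0 : ∀ i, 0 ≤ P0 i) (hP0sum : ∑ i, P0 i = 1)
    (Q : ℕ → Fin V → Fin V → ℝ) (P : ℕ → Fin V → ℝ)
    (hQnn : ∀ τ, t ≤ τ → τ < T → ∀ i j, 0 ≤ Q τ i j)
    (hQsum : ∀ τ, t ≤ τ → τ < T → ∀ i, ∑ j, Q τ i j = 1)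
    (hPt : P t = P0)
    (hPrec : ∀ τ, t ≤ τ → τ < T → ∀ j, P (τ + 1) j = ∑ i, P τ i * Q τ i j) :
    ∑ τ ∈ Finset.Ico t T, ∑ i, ∑ j,
        P τ i * Q τ i j * (C τ i j + α * Real.log (Qstar τ i j / R τ i j))
      = -α * ∑ i, P0 i * Real.log (φ t i) := by
  haveI : Nonempty (Fin V) := ⟨⟨0, by omega⟩⟩
  -- positivity of φ
  have hφpos : ∀ k τ, τ + k = T → ∀ i, 0 < φ τ i := by
    intro k
    induction k with
    | zero =>
      intro τ h i
      have : τ = T := by omega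
      rw [this, hφT]; norm_num
    | succ k ih =>
      intro τ h i
      have hτT : τ < T := by omega
      rw [hφ τ hτT i]
      apply Finset.sum_pos
      · intro j _
        have h1 := hRpos τ hτT i j
        have h2 := ih (τ + 1) (by omega) j
        positivity
      · exact Finset.univ_nonempty
  have hφpos' : ∀ τ, τ ≤ T → ∀ i, 0 < φ τ i :=
    fun τ h i => hφpos (T - τ) τ (by omega) i
  -- key rewrite of the cost term
  have hkey : ∀ τ, t ≤ τ → τ < T → ∀ i j : Fin V,
      C τ i j + α * Real.log (Qstar τ i j / R τ i j)
        = α * (Real.log (φ (τ + 1) j) - Real.log (φ τ i)) := by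
    intro τ _ hτT i j
    have hR := hRpos τ hτT i j
    have hφn := hφpos' (τ + 1) (by omega) j
    have hφd := hφpos' τ (by omega) i
    rw [hQstar τ hτT i j]
    have : φ (τ + 1) j / φ τ i * R τ i j * Real.exp (-(C τ i j) / α) / R τ i j
        = φ (τ + 1) j / φ τ i * Real.exp (-(C τ i j) / α) := by
      field_simp
    rw [this, Real.log_mul (by positivity) (Real.exp_ne_zero _),
      Real.log_exp, Real.log_div (by positivity) (by positivity)]
    field_simp
    ring
  -- define f and show each inner double sum telescopes
  set f : ℕ → ℝ := fun τ => α * ∑ i, P τ i * Real.log (φ τ i) with hf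
  have hstep : ∀ τ ∈ Finset.Ico t T,
      (∑ i, ∑ j, P τ i * Q τ i j * (C τ i j + α * Real.log (Qstar τ i j / R τ i j)))
        = f (τ + 1) - f τ := by
    intro τ hτ
    rw [Finset.mem_Ico] at hτ
    obtain ⟨htτ, hτT⟩ := hτ
    have e1 : ∀ i j : Fin V, P τ i * Q τ i j * (C τ i j + α * Real.log (Qstar τ i j / R τ i j))
        = α * (P τ i * Q τ i j * Real.log (φ (τ + 1) j))
          - α * (P τ i * Q τ i j * Real.log (φ τ i)) := by
      intro i j
      rw [hkey τ htτ hτT i j]; ring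
    simp only [e1, Finset.sum_sub_distrib, ← Finset.mul_sum]
    have e2 : ∑ i, ∑ j, P τ i * Q τ i j * Real.log (φ (τ + 1) j)
        = ∑ j, P (τ + 1) j * Real.log (φ (τ + 1) j) := by
      rw [Finset.sum_comm]
      refine Finset.sum_congr rfl fun j _ => ?_
      rw [hPrec τ htτ hτT j, Finset.sum_mul]
    have e3 : ∑ i, ∑ j, P τ i * Q τ i j * Real.log (φ τ i)
        = ∑ i, P τ i * Real.log (φ τ i) := by
      refine Finset.sum_congr rfl fun i _ => ?_
      have : ∀ j : Fin V, P τ i * Q τ i j * Real.log (φ τ i)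
          = Q τ i j * (P τ i * Real.log (φ τ i)) := fun j => by ring
      simp only [this, ← Finset.sum_mul, hQsum τ htτ hτT i, one_mul]
    rw [e2, e3, hf]
  rw [Finset.sum_congr rfl hstep, telescope_Ico f t T (le_of_lt ht)]
  have hfT : f T = 0 := by simp [hf, hφT]
  rw [hfT, hf]
  simp [hPt]
end

section
/- In the KL-control setting (fixed-point/consistency condition): for every initial probability vector P_0, the policy Q* attains the minimum over all admissible policies {Q_t}_{t=0}^{T−1} (with induced distributions P_{t+1}^j = Σ_i P_t^i Q_t^{ij}) of the functional Σ_{t=0}^{T−1} Σ_{i,j} P_t^i Q_t^{ij} ( C_t^{ij} + α·log(Q*_t^{ij}/R_t^{ij}) ), i.e., Q* is a minimizer of the optimal-control problem in which the logarithmic term is held fixed at Q* itself. -/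
/-!
With `g t i := α log φ_t^i`, the defining recursion for `φ` turns the fixed cost
`C_t^{ij} + α log(Q*_t^{ij} / R_t^{ij})` into the increment `g_{t+1}^j - g_t^i` of a potential.
Along any chain driven by stochastic matrices the expected increments telescope, so the functional
equals `Σ_i P_T^i g_T^i - Σ_i P_0^i g_0^i = -α Σ_i P_0^i log φ_0^i` (as `φ_T = 1`) for every
admissible policy; in particular `Q*` attains the minimum.
-/

open Finset Real

section Chain

variable {ι : Type*} [Fintype ι]

theorem sum_mul_transition_mul_sub (p : ι → ℝ) (q : ι → ι → ℝ) (f g : ι → ℝ)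
    (hq : ∀ i, ∑ j, q i j = 1) :
    ∑ i, ∑ j, p i * q i j * (g j - f i) = ∑ j, (∑ i, p i * q i j) * g j - ∑ i, p i * f i := by
  have hf : ∑ i, ∑ j, p i * q i j * f i = ∑ i, p i * f i := by
    refine sum_congr rfl fun i _ => ?_
    rw [← sum_mul, ← mul_sum, hq, mul_one]
  simp only [mul_sub, sum_sub_distrib, hf, sum_mul]
  rw [sum_comm]

theorem sum_range_expected_increment_eq (T : ℕ) (P : ℕ → ι → ℝ) (Q : ℕ → ι → ι → ℝ)
    (g : ℕ → ι → ℝ) (hQ : ∀ t, t < T → ∀ i, ∑ j, Q t i j = 1)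
    (hP : ∀ t, t < T → ∀ j, P (t + 1) j = ∑ i, P t i * Q t i j) :
    ∑ t ∈ range T, ∑ i, ∑ j, P t i * Q t i j * (g (t + 1) j - g t i)
      = ∑ i, P T i * g T i - ∑ i, P 0 i * g 0 i := by
  rw [← sum_range_sub (fun t => ∑ i, P t i * g t i)]
  refine sum_congr rfl fun t ht => ?_
  have ht : t < T := mem_range.mp ht
  simp only [sum_mul_transition_mul_sub _ _ _ _ (hQ t ht), hP t ht]

theorem backward_recursion_pos (T : ℕ) (K : ℕ → ι → ι → ℝ) (φ : ℕ → ι → ℝ)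
    (hK : ∀ t, t < T → ∀ i j, 0 < K t i j) (hφT : ∀ i, 0 < φ T i)
    (hφ : ∀ t, t < T → ∀ i, φ t i = ∑ j, K t i j * φ (t + 1) j) :
    ∀ t, t ≤ T → ∀ i, 0 < φ t i := by
  intro t ht
  refine Nat.decreasingInduction (motive := fun t _ => ∀ i, 0 < φ t i)
    (fun t ht ih i => ?_) hφT ht
  rw [hφ t ht i]
  exact sum_pos (fun j _ => mul_pos (hK t ht i j) (ih j)) ⟨i, mem_univ i⟩

theorem sum_gibbs_eq_one (α φ₀ : ℝ) (φ₁ r c : ι → ℝ)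
    (hφ₀ : φ₀ = ∑ j, r j * exp (-c j / α) * φ₁ j) (hφ₀_ne : φ₀ ≠ 0) :
    ∑ j, φ₁ j / φ₀ * r j * exp (-c j / α) = 1 := by
  rw [← div_self hφ₀_ne, hφ₀, sum_div]
  refine sum_congr rfl fun j _ => ?_
  ring

end Chain

theorem add_mul_log_gibbs_div_eq {α φ₀ φ₁ r : ℝ} (c : ℝ) (hα : α ≠ 0) (hφ₀ : 0 < φ₀)
    (hφ₁ : 0 < φ₁) (hr : 0 < r) :
    c + α * log (φ₁ / φ₀ * r * exp (-c / α) / r) = α * log φ₁ - α * log φ₀ := by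
  rw [show φ₁ / φ₀ * r * exp (-c / α) / r = φ₁ / φ₀ * exp (-c / α) by field_simp,
    log_mul (by positivity) (exp_ne_zero _), log_div hφ₁.ne' hφ₀.ne', log_exp]
  field_simp
  ring

theorem stmt_4_general
    (V T : ℕ)
    (α : ℝ) (hα : 0 < α)
    (C R : ℕ → Fin V → Fin V → ℝ)
    (hRpos : ∀ t, t < T → ∀ i j, 0 < R t i j)
    (φ : ℕ → Fin V → ℝ)
    (hφT : ∀ i, φ T i = 1)
    (hφ : ∀ t, t < T → ∀ i,
      φ t i = ∑ j, R t i j * Real.exp (-(C t i j) / α) * φ (t + 1) j)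
    (Qstar : ℕ → Fin V → Fin V → ℝ)
    (hQstar : ∀ t, t < T → ∀ i j,
      Qstar t i j = φ (t + 1) j / φ t i * R t i j * Real.exp (-(C t i j) / α))
    (P0 : Fin V → ℝ)
    (Pstar : ℕ → Fin V → ℝ) (hPstar0 : Pstar 0 = P0)
    (hPstar : ∀ t, t < T → ∀ j, Pstar (t + 1) j = ∑ i, Pstar t i * Qstar t i j) :
    ∀ (Q : ℕ → Fin V → Fin V → ℝ) (P : ℕ → Fin V → ℝ),
      (∀ t, t < T → ∀ i j, 0 ≤ Q t i j) →
      (∀ t, t < T → ∀ i, ∑ j, Q t i j = 1) →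
      P 0 = P0 →
      (∀ t, t < T → ∀ j, P (t + 1) j = ∑ i, P t i * Q t i j) →
      ∑ t ∈ Finset.range T, ∑ i, ∑ j,
          Pstar t i * Qstar t i j * (C t i j + α * Real.log (Qstar t i j / R t i j))
        ≤ ∑ t ∈ Finset.range T, ∑ i, ∑ j,
            P t i * Q t i j * (C t i j + α * Real.log (Qstar t i j / R t i j)) := by
  have hφpos := backward_recursion_pos T _ φ
    (fun t ht i j => mul_pos (hRpos t ht i j) (exp_pos _)) (by simp [hφT]) hφ
  have hQstar_sum (t : ℕ) (ht : t < T) (i : Fin V) : ∑ j, Qstar t i j = 1 := by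
    simp only [hQstar t ht i]
    exact sum_gibbs_eq_one _ _ _ _ _ (hφ t ht i) (hφpos t ht.le i).ne'
  have value_eq (Q : ℕ → Fin V → Fin V → ℝ) (P : ℕ → Fin V → ℝ)
      (hQ : ∀ t, t < T → ∀ i, ∑ j, Q t i j = 1) (hP0 : P 0 = P0)
      (hP : ∀ t, t < T → ∀ j, P (t + 1) j = ∑ i, P t i * Q t i j) :
      ∑ t ∈ range T, ∑ i, ∑ j, P t i * Q t i j * (C t i j + α * log (Qstar t i j / R t i j))
        = -∑ i, P0 i * (α * log (φ 0 i)) := by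
    have hcost (t : ℕ) (ht : t < T) (i j : Fin V) : C t i j + α * log (Qstar t i j / R t i j)
        = α * log (φ (t + 1) j) - α * log (φ t i) := by
      rw [hQstar t ht i j]
      exact add_mul_log_gibbs_div_eq _ hα.ne' (hφpos t ht.le i) (hφpos (t + 1) ht j)
        (hRpos t ht i j)
    calc _ = ∑ t ∈ range T, ∑ i, ∑ j,
          P t i * Q t i j * (α * log (φ (t + 1) j) - α * log (φ t i)) :=
          sum_congr rfl fun t ht => by simp only [hcost t (mem_range.mp ht)]
      _ = _ := by
        rw [sum_range_expected_increment_eq T P Q (fun t i => α * log (φ t i)) hQ hP]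
        simp [hφT, hP0]
  intro Q P _ hQ hP0 hP
  rw [value_eq Qstar Pstar hQstar_sum hPstar0 hPstar, value_eq Q P hQ hP0 hP]

theorem stmt_4
    (V T : ℕ) (hV : 1 ≤ V) (hT : 1 ≤ T)
    (α : ℝ) (hα : 0 < α)
    (C R : ℕ → Fin V → Fin V → ℝ)
    (hRpos : ∀ t, t < T → ∀ i j, 0 < R t i j)
    (hRsum : ∀ t, t < T → ∀ i, ∑ j, R t i j = 1)
    (φ : ℕ → Fin V → ℝ)
    (hφT : ∀ i, φ T i = 1)
    (hφ : ∀ t, t < T → ∀ i,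
      φ t i = ∑ j, R t i j * Real.exp (-(C t i j) / α) * φ (t + 1) j)
    (Qstar : ℕ → Fin V → Fin V → ℝ)
    (hQstar : ∀ t, t < T → ∀ i j,
      Qstar t i j = φ (t + 1) j / φ t i * R t i j * Real.exp (-(C t i j) / α))
    (P0 : Fin V → ℝ) (hP0 : ∀ i, 0 ≤ P0 i) (hP0sum : ∑ i, P0 i = 1)
    (Pstar : ℕ → Fin V → ℝ) (hPstar0 : Pstar 0 = P0)
    (hPstar : ∀ t, t < T → ∀ j, Pstar (t + 1) j = ∑ i, Pstar t i * Qstar t i j) :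
    ∀ (Q : ℕ → Fin V → Fin V → ℝ) (P : ℕ → Fin V → ℝ),
      (∀ t, t < T → ∀ i j, 0 ≤ Q t i j) →
      (∀ t, t < T → ∀ i, ∑ j, Q t i j = 1) →
      P 0 = P0 →
      (∀ t, t < T → ∀ j, P (t + 1) j = ∑ i, P t i * Q t i j) →
      ∑ t ∈ Finset.range T, ∑ i, ∑ j,
          Pstar t i * Qstar t i j * (C t i j + α * Real.log (Qstar t i j / R t i j))
        ≤ ∑ t ∈ Finset.range T, ∑ i, ∑ j,
            P t i * Q t i j * (C t i j + α * Real.log (Qstar t i j / R t i j)) :=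
  stmt_4_general V T α hα C R hRpos φ hφT hφ Qstar hQstar P0 Pstar hPstar0 hPstar
end

section
/- Let p, q ∈ (0,1], R > 0, and α > 0. For each integer N ≥ 1 define Π_N = α·[ Σ_{k=0}^{N−1} log((k+1)/N)·C(N−1,k)·(pq)^k·(1−pq)^{N−1−k} − Σ_{k=0}^{N−1} log((k+1)/N)·C(N−1,k)·p^k·(1−p)^{N−1−k} − log R ]. Then lim_{N→∞} Π_N = α·log(q/R). -/
/-!
With `B ~ Binomial(n, x)`, each sum in `Π_N` is `E[log ((1 + B) / (n + 1))]` with `n = N - 1`.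
The tangent-line inequality `log a ≤ log b + a / b - 1` squeezes it from both sides: taking `b`
the mean `(n x + 1) / (n + 1)` of `(1 + B) / (n + 1)` gives the upper bound
`log ((n x + 1) / (n + 1))` (Jensen), and taking `a = x` together with the identity
`(n + 1) x E[1 / (1 + B)] = 1 - (1 - x) ^ (n + 1)` gives the lower bound `log x`.
So the sums tend to `log (p q)` and `log p`, and
`Π_N → α (log (p q) - log p - log R) = α log (q / R)`.
-/

open Finset Filter Real Polynomial

namespace bernsteinPolynomial

theorem add_one_mul_succ_eq {R : Type*} [CommRing R] (n k : ℕ) :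
    ((k : R[X]) + 1) * bernsteinPolynomial R (n + 1) (k + 1)
      = ((n : R[X]) + 1) * X * bernsteinPolynomial R n k := by
  have h : (((n + 1) * n.choose k : ℕ) : R[X])
      = (((n + 1).choose (k + 1) * (k + 1) : ℕ) : R[X]) :=
    congrArg _ (Nat.add_one_mul_choose_eq n k)
  push_cast at h
  simp only [bernsteinPolynomial, Nat.add_sub_add_right]
  linear_combination (X ^ k * (1 - X) ^ (n - k) * X) * h.symm

theorem eval_eq (n k : ℕ) (x : ℝ) :
    (bernsteinPolynomial ℝ n k).eval x = n.choose k * x ^ k * (1 - x) ^ (n - k) := by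
  simp [bernsteinPolynomial]

theorem eval_nonneg (n : ℕ) {x : ℝ} (h0 : 0 ≤ x) (h1 : x ≤ 1) (k : ℕ) :
    0 ≤ (bernsteinPolynomial ℝ n k).eval x := by
  have : 0 ≤ 1 - x := by linarith
  rw [eval_eq]
  positivity

theorem sum_eval (n : ℕ) (x : ℝ) :
    ∑ k ∈ range (n + 1), (bernsteinPolynomial ℝ n k).eval x = 1 := by
  simpa [eval_finsetSum] using congrArg (eval x) (bernsteinPolynomial.sum ℝ n)

theorem sum_mul_eval (n : ℕ) (x : ℝ) :
    ∑ k ∈ range (n + 1), (k : ℝ) * (bernsteinPolynomial ℝ n k).eval x = n * x := by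
  simpa [eval_finsetSum] using congrArg (eval x) (bernsteinPolynomial.sum_smul ℝ n)

theorem mul_sum_eval_div_succ (n : ℕ) (x : ℝ) :
    ((n : ℝ) + 1) * x *
        ∑ k ∈ range (n + 1), (bernsteinPolynomial ℝ n k).eval x / ((k : ℝ) + 1)
      = 1 - (1 - x) ^ (n + 1) := by
  have hsum := sum_eval (n + 1) x
  rw [sum_range_succ', eval_eq] at hsum
  simp only [Nat.choose_zero_right, Nat.cast_one, pow_zero, Nat.sub_zero, one_mul] at hsum
  rw [← eq_sub_of_add_eq hsum, Finset.mul_sum]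
  refine Finset.sum_congr rfl fun k _ => ?_
  have h := congrArg (eval x) (add_one_mul_succ_eq (R := ℝ) n k)
  simp only [eval_mul, eval_add, eval_natCast, eval_one, eval_X] at h
  field_simp
  linarith

end bernsteinPolynomial

theorem log_le_log_add_div_sub_one {a b : ℝ} (ha : 0 < a) (hb : 0 < b) :
    log a ≤ log b + a / b - 1 := by
  have := log_le_sub_one_of_pos (div_pos ha hb)
  rw [log_div ha.ne' hb.ne'] at this
  linarith

/-- `E[log ((1 + B) / (n + 1))]` for `B ~ Binomial(n, x)` -/
noncomputable def meanLogShare (n : ℕ) (x : ℝ) : ℝ :=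
  ∑ k ∈ range (n + 1), log ((k + 1) / (n + 1)) * (bernsteinPolynomial ℝ n k).eval x

theorem log_le_meanLogShare (n : ℕ) {x : ℝ} (h0 : 0 < x) (h1 : x ≤ 1) :
    log x ≤ meanLogShare n x := by
  set w := fun k => (bernsteinPolynomial ℝ n k).eval x
  have hterm : ∀ k ∈ range (n + 1),
      (log x + 1) * w k - ((n : ℝ) + 1) * x * (w k / ((k : ℝ) + 1))
        ≤ log ((k + 1) / (n + 1)) * w k := by
    intro k _
    have htangent := log_le_log_add_div_sub_one h0 (by positivity : (0 : ℝ) < (k + 1) / (n + 1))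
    have hw := bernsteinPolynomial.eval_nonneg n h0.le h1 k
    rw [div_div_eq_mul_div, mul_comm x] at htangent
    calc (log x + 1) * w k - ((n : ℝ) + 1) * x * (w k / ((k : ℝ) + 1))
        = (log x + 1 - ((n : ℝ) + 1) * x / ((k : ℝ) + 1)) * w k := by ring
      _ ≤ log ((k + 1) / (n + 1)) * w k := by gcongr; linarith
  calc log x ≤ log x + (1 - x) ^ (n + 1) := le_add_of_nonneg_right (by bound)
    _ = ∑ k ∈ range (n + 1),
          ((log x + 1) * w k - ((n : ℝ) + 1) * x * (w k / ((k : ℝ) + 1))) := by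
      rw [sum_sub_distrib, ← Finset.mul_sum, ← Finset.mul_sum,
        bernsteinPolynomial.mul_sum_eval_div_succ, bernsteinPolynomial.sum_eval]
      ring
    _ ≤ meanLogShare n x := sum_le_sum hterm

theorem meanLogShare_le (n : ℕ) {x : ℝ} (h0 : 0 ≤ x) (h1 : x ≤ 1) :
    meanLogShare n x ≤ log ((n * x + 1) / (n + 1)) := by
  set w := fun k => (bernsteinPolynomial ℝ n k).eval x
  set m : ℝ := (n * x + 1) / (n + 1)
  have hm : 0 < m := by positivity
  have hmean : ∑ k ∈ range (n + 1), (k + 1) / (n + 1) * w k = m := by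
    simp only [div_mul_eq_mul_div, ← Finset.sum_div, add_mul, one_mul, sum_add_distrib,
      w, bernsteinPolynomial.sum_mul_eval, bernsteinPolynomial.sum_eval, m]
  calc meanLogShare n x
      ≤ ∑ k ∈ range (n + 1), (log m + (k + 1) / (n + 1) / m - 1) * w k := by
        refine sum_le_sum fun k _ => ?_
        gcongr ?_ * _
        · exact bernsteinPolynomial.eval_nonneg n h0 h1 k
        · exact log_le_log_add_div_sub_one (by positivity) hm
    _ = log m + (∑ k ∈ range (n + 1), (k + 1) / (n + 1) * w k) / m - 1 := by
        simp only [sub_mul, add_mul, one_mul, sum_sub_distrib, sum_add_distrib, ← Finset.mul_sum,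
          w, bernsteinPolynomial.sum_eval, Finset.sum_div, div_mul_eq_mul_div]
        ring
    _ = log m := by rw [hmean, div_self hm.ne']; ring

theorem tendsto_meanLogShare {x : ℝ} (h0 : 0 < x) (h1 : x ≤ 1) :
    Tendsto (meanLogShare · x) atTop (nhds (log x)) := by
  have hmean : Tendsto (fun n : ℕ => ((n : ℝ) * x + 1) / (n + 1)) atTop (nhds x) := by
    have := (tendsto_one_div_add_atTop_nhds_zero_nat.const_mul (1 - x)).const_add x
    rw [mul_zero, add_zero] at this
    refine this.congr fun n => ?_
    field_simp
    ring
  exact tendsto_of_tendsto_of_tendsto_of_le_of_le tendsto_const_nhds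
    ((continuousAt_log h0.ne').tendsto.comp hmean)
    (fun n => log_le_meanLogShare n h0 h1) (fun n => meanLogShare_le n h0.le h1)

theorem tendsto_sum_log_div_mul_binomial {x : ℝ} (h0 : 0 < x) (h1 : x ≤ 1) :
    Tendsto (fun N : ℕ => ∑ k ∈ range N,
        log ((k + 1) / N) * ((N - 1).choose k : ℝ) * x ^ k * (1 - x) ^ (N - 1 - k))
      atTop (nhds (log x)) := by
  refine ((tendsto_meanLogShare h0 h1).comp (tendsto_sub_atTop_nat 1)).congr' ?_
  filter_upwards [eventually_ge_atTop 1] with N hN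
  obtain ⟨n, rfl⟩ := Nat.exists_eq_add_of_le' hN
  simp [meanLogShare, bernsteinPolynomial.eval_eq, mul_assoc]

theorem stmt_5_general
    (p q R α : ℝ)
    (hp : p ∈ Set.Ioc (0 : ℝ) 1) (hq : q ∈ Set.Ioc (0 : ℝ) 1)
    (hR : 0 < R) :
    Filter.Tendsto
      (fun N : ℕ =>
        α * ((∑ k ∈ Finset.range N,
                Real.log (((k : ℝ) + 1) / (N : ℝ)) * ((N - 1).choose k : ℝ) *
                  (p * q) ^ k * (1 - p * q) ^ (N - 1 - k))
           - (∑ k ∈ Finset.range N,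
                Real.log (((k : ℝ) + 1) / (N : ℝ)) * ((N - 1).choose k : ℝ) *
                  p ^ k * (1 - p) ^ (N - 1 - k))
           - Real.log R))
      Filter.atTop (nhds (α * Real.log (q / R))) := by
  obtain ⟨hp0, hp1⟩ := hp
  obtain ⟨hq0, hq1⟩ := hq
  have hpq := tendsto_sum_log_div_mul_binomial (mul_pos hp0 hq0) (mul_le_one₀ hp1 hq0.le hq1)
  have hlim := ((hpq.sub (tendsto_sum_log_div_mul_binomial hp0 hp1)).sub_const (log R)).const_mul α
  rwa [log_mul hp0.ne' hq0.ne', add_sub_cancel_left, ← log_div hq0.ne' hR.ne'] at hlim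

theorem stmt_5
    (p q R α : ℝ)
    (hp : p ∈ Set.Ioc (0 : ℝ) 1) (hq : q ∈ Set.Ioc (0 : ℝ) 1)
    (hR : 0 < R) (hα : 0 < α) :
    Filter.Tendsto
      (fun N : ℕ =>
        α * ((∑ k ∈ Finset.range N,
                Real.log (((k : ℝ) + 1) / (N : ℝ)) * ((N - 1).choose k : ℝ) *
                  (p * q) ^ k * (1 - p * q) ^ (N - 1 - k))
           - (∑ k ∈ Finset.range N,
                Real.log (((k : ℝ) + 1) / (N : ℝ)) * ((N - 1).choose k : ℝ) *
                  p ^ k * (1 - p) ^ (N - 1 - k))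
           - Real.log R))
      Filter.atTop (nhds (α * Real.log (q / R))) :=
  stmt_5_general p q R α hp hq hR
end

section
/- For every p ∈ (0,1], lim_{N→∞} Σ_{k=0}^{N−1} log((k+1)/N) · C(N−1,k) · p^k · (1−p)^{N−1−k} = log p. Equivalently, if S_N is a Binomial(N−1, p) random variable, then E[log((1+S_N)/N)] → log p as N → ∞. -/
/-!
STATEMENT 6: For every `p ∈ (0,1]`,
`Σ_{k=0}^{N−1} log((k+1)/N) C(N−1,k) p^k (1−p)^{N−1−k} → log p` as `N → ∞`
(i.e. `E[log((1+S_N)/N)] → log p` for `S_N ~ Binomial(N−1, p)`).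
-/

open Finset


lemma sumA (p q : ℝ) (h : p + q = 1) (M : ℕ) :
    ∑ k ∈ range (M+1), (M.choose k : ℝ) * p^k * q^(M-k) = 1 := by
  have h2 := add_pow p q M
  rw [h, one_pow] at h2
  rw [show (1:ℝ) = ∑ k ∈ range (M+1), p^k * q^(M-k) * (M.choose k) from h2]
  exact Finset.sum_congr rfl fun k _ => by ring

lemma sumK (p q : ℝ) (h : p + q = 1) (M : ℕ) :
    ∑ k ∈ range (M+1), (k : ℝ) * ((M.choose k : ℝ) * p^k * q^(M-k)) = M * p := by
  cases M with
  | zero => simp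
  | succ m =>
    rw [Finset.sum_range_succ']
    simp only [Nat.cast_zero, zero_mul, add_zero, Nat.cast_add, Nat.cast_one]
    have key : ∀ i ∈ range (m+1), ((i:ℝ)+1) * (((m+1).choose (i+1) : ℝ) * p^(i+1) * q^(m+1-(i+1))) =
        ((m:ℝ)+1) * p * ((m.choose i : ℝ) * p^i * q^(m-i)) := by
      intro i hi
      have h1 : (m+1) * m.choose i = (m+1).choose (i+1) * (i+1) := Nat.add_one_mul_choose_eq m i
      have h2 : ((m:ℝ)+1) * (m.choose i : ℝ) = ((m+1).choose (i+1) : ℝ) * ((i:ℝ)+1) := by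
        exact_mod_cast congrArg (Nat.cast (R := ℝ)) h1
      have h3 : m+1-(i+1) = m - i := by omega
      rw [h3, pow_succ]
      linear_combination (-(p^i * p * q^(m-i))) * h2
    calc ∑ i ∈ range (m+1), ((i:ℝ)+1) * (((m+1).choose (i+1) : ℝ) * p^(i+1) * q^(m+1-(i+1)))
        = ∑ i ∈ range (m+1), ((m:ℝ)+1) * p * ((m.choose i : ℝ) * p^i * q^(m-i)) :=
          Finset.sum_congr rfl key
      _ = ((m:ℝ)+1) * p * 1 := by rw [← Finset.mul_sum, sumA p q h m]
      _ = ((m:ℝ)+1) * p := by ring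

lemma sumC (p q : ℝ) (h : p + q = 1) (hp : p ≠ 0) (M : ℕ) :
    ∑ k ∈ range (M+1), (1/((k:ℝ)+1)) * ((M.choose k : ℝ) * p^k * q^(M-k))
      = (1 - q^(M+1)) / (((M:ℝ)+1)*p) := by
  have hM1 : ((M:ℝ)+1) ≠ 0 := by positivity
  rw [eq_div_iff (mul_ne_zero hM1 hp), Finset.sum_mul]
  have key : ∀ k ∈ range (M+1), (1/((k:ℝ)+1)) * ((M.choose k : ℝ) * p^k * q^(M-k)) * (((M:ℝ)+1)*p)
      = ((M+1).choose (k+1) : ℝ) * p^(k+1) * q^(M+1-(k+1)) := by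
    intro k hk
    have h1 : (M+1) * M.choose k = (M+1).choose (k+1) * (k+1) := Nat.add_one_mul_choose_eq M k
    have h2 : ((M:ℝ)+1) * (M.choose k : ℝ) = ((M+1).choose (k+1) : ℝ) * ((k:ℝ)+1) := by
      exact_mod_cast congrArg (Nat.cast (R := ℝ)) h1
    have h3 : M+1-(k+1) = M - k := by omega
    have hk1 : ((k:ℝ)+1) ≠ 0 := by positivity
    rw [h3, pow_succ]
    field_simp
    linear_combination (q^(M-k)) * h2
  rw [Finset.sum_congr rfl key]
  have hA := sumA p q h (M+1)
  rw [Finset.sum_range_succ'] at hA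
  simp only [Nat.choose_zero_right, Nat.cast_one, pow_zero, one_mul, mul_one, Nat.sub_zero] at hA
  linarith [hA]


lemma logbd (p : ℝ) (hp0 : 0 < p) (M k : ℕ) :
    Real.log p + 1 - (((M:ℝ)+1)*p)/((k:ℝ)+1) ≤ Real.log (((k:ℝ)+1)/((M:ℝ)+1)) ∧
    Real.log (((k:ℝ)+1)/((M:ℝ)+1)) ≤ Real.log p - 1 + ((k:ℝ)+1)/(((M:ℝ)+1)*p) := by
  have hk : (0:ℝ) < (k:ℝ)+1 := by positivity
  have hM : (0:ℝ) < (M:ℝ)+1 := by positivity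
  set x := ((k:ℝ)+1)/(((M:ℝ)+1)*p) with hxdef
  have hx : 0 < x := by positivity
  have hlogx : Real.log x = Real.log (((k:ℝ)+1)/((M:ℝ)+1)) - Real.log p := by
    rw [hxdef, Real.log_div (ne_of_gt hk) (by positivity),
        Real.log_mul (ne_of_gt hM) (ne_of_gt hp0),
        Real.log_div (ne_of_gt hk) (ne_of_gt hM)]
    ring
  have h1 : Real.log x ≤ x - 1 := Real.log_le_sub_one_of_pos hx
  have h2 : 1 - 1/x ≤ Real.log x := by
    have h3 := Real.log_le_sub_one_of_pos (show (0:ℝ) < 1/x by positivity)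
    rw [Real.log_div one_ne_zero (ne_of_gt hx), Real.log_one] at h3
    linarith
  have h1x : 1/x = (((M:ℝ)+1)*p)/((k:ℝ)+1) := by rw [hxdef, one_div_div]
  constructor
  · rw [← h1x]; linarith
  · linarith

lemma bounds (p q : ℝ) (h : p + q = 1) (hp0 : 0 < p) (hq0 : 0 ≤ q) (M : ℕ) :
    Real.log p ≤ (∑ k ∈ range (M+1),
        Real.log (((k:ℝ)+1)/((M:ℝ)+1)) * ((M.choose k : ℝ) * p^k * q^(M-k))) ∧
    (∑ k ∈ range (M+1),
        Real.log (((k:ℝ)+1)/((M:ℝ)+1)) * ((M.choose k : ℝ) * p^k * q^(M-k)))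
      ≤ Real.log p + (1-p)/(((M:ℝ)+1)*p) := by
  have hw : ∀ k, (0:ℝ) ≤ (M.choose k : ℝ) * p^k * q^(M-k) := fun k => by positivity
  have hMp : (0:ℝ) < ((M:ℝ)+1)*p := by positivity
  constructor
  · calc Real.log p ≤ Real.log p + q^(M+1) := by
          nlinarith [pow_nonneg hq0 (M+1)]
      _ = ∑ k ∈ range (M+1), ((Real.log p + 1) * ((M.choose k : ℝ) * p^k * q^(M-k))
            - (((M:ℝ)+1)*p) * ((1/((k:ℝ)+1)) * ((M.choose k : ℝ) * p^k * q^(M-k)))) := by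
          rw [Finset.sum_sub_distrib, ← Finset.mul_sum, ← Finset.mul_sum,
              sumA p q h M, sumC p q h (ne_of_gt hp0) M]
          field_simp
          ring
      _ ≤ _ := by
          apply Finset.sum_le_sum
          intro k hk
          have h' := mul_le_mul_of_nonneg_right (logbd p hp0 M k).1 (hw k)
          have e : (Real.log p + 1) * ((M.choose k : ℝ) * p^k * q^(M-k))
              - (((M:ℝ)+1)*p) * ((1/((k:ℝ)+1)) * ((M.choose k : ℝ) * p^k * q^(M-k)))
              = (Real.log p + 1 - (((M:ℝ)+1)*p)/((k:ℝ)+1)) * ((M.choose k : ℝ) * p^k * q^(M-k)) := by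
            ring
          rw [e]; exact h'
  · calc (∑ k ∈ range (M+1),
        Real.log (((k:ℝ)+1)/((M:ℝ)+1)) * ((M.choose k : ℝ) * p^k * q^(M-k)))
        ≤ ∑ k ∈ range (M+1), ((Real.log p - 1) * ((M.choose k : ℝ) * p^k * q^(M-k))
            + (1/(((M:ℝ)+1)*p)) * (((k:ℝ)+1) * ((M.choose k : ℝ) * p^k * q^(M-k)))) := by
          apply Finset.sum_le_sum
          intro k hk
          have h' := mul_le_mul_of_nonneg_right (logbd p hp0 M k).2 (hw k)
          have e : (Real.log p - 1) * ((M.choose k : ℝ) * p^k * q^(M-k))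
              + (1/(((M:ℝ)+1)*p)) * (((k:ℝ)+1) * ((M.choose k : ℝ) * p^k * q^(M-k)))
              = (Real.log p - 1 + ((k:ℝ)+1)/(((M:ℝ)+1)*p)) * ((M.choose k : ℝ) * p^k * q^(M-k)) := by
            ring
          rw [e]; exact h'
      _ = Real.log p + (1-p)/(((M:ℝ)+1)*p) := by
          have hKB : ∑ k ∈ range (M+1), ((k:ℝ)+1) * ((M.choose k : ℝ) * p^k * q^(M-k))
              = (M:ℝ)*p + 1 := by
            have e2 : ∀ k ∈ range (M+1), ((k:ℝ)+1) * ((M.choose k : ℝ) * p^k * q^(M-k))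
                = (k:ℝ) * ((M.choose k : ℝ) * p^k * q^(M-k)) + (M.choose k : ℝ) * p^k * q^(M-k) :=
              fun k _ => by ring
            rw [Finset.sum_congr rfl e2, Finset.sum_add_distrib, sumA p q h M, sumK p q h M]
          rw [Finset.sum_add_distrib, ← Finset.mul_sum, ← Finset.mul_sum, sumA p q h M, hKB]
          field_simp
          ring


theorem stmt_6
    (p : ℝ) (hp : p ∈ Set.Ioc (0 : ℝ) 1) :
    Filter.Tendsto
      (fun N : ℕ =>
        ∑ k ∈ Finset.range N,
          Real.log (((k : ℝ) + 1) / (N : ℝ)) * ((N - 1).choose k : ℝ) *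
            p ^ k * (1 - p) ^ (N - 1 - k))
      Filter.atTop (nhds (Real.log p)) := by
  obtain ⟨hp0, hp1⟩ := hp
  have hpq : p + (1 - p) = 1 := by ring
  have hq0 : (0:ℝ) ≤ 1 - p := by linarith
  have key : ∀ M : ℕ, (∑ k ∈ Finset.range (M+1),
        Real.log (((k : ℝ) + 1) / ((M+1 : ℕ) : ℝ)) * (((M+1) - 1).choose k : ℝ) *
          p ^ k * (1 - p) ^ ((M+1) - 1 - k))
      = ∑ k ∈ Finset.range (M+1),
          Real.log (((k:ℝ)+1)/((M:ℝ)+1)) * ((M.choose k : ℝ) * p^k * (1-p)^(M-k)) := by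
    intro M
    apply Finset.sum_congr rfl
    intro k hk
    simp only [Nat.add_sub_cancel]
    push_cast
    ring
  apply tendsto_of_tendsto_of_tendsto_of_le_of_le'
      (g := fun _ : ℕ => Real.log p)
      (h := fun N : ℕ => Real.log p + (1-p)/((N:ℝ)*p))
  · exact tendsto_const_nhds
  · have h0 : Filter.Tendsto (fun N : ℕ => (1-p)/((N:ℝ)*p)) Filter.atTop (nhds 0) := by
      have e : (fun N : ℕ => (1-p)/((N:ℝ)*p)) = fun N : ℕ => ((1-p)/p) * (1/(N:ℝ)) :=
        funext fun N => by ring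
      rw [e]
      have h1 := tendsto_one_div_atTop_nhds_zero_nat.const_mul ((1-p)/p)
      rwa [mul_zero] at h1
    have h2 := Filter.Tendsto.add (tendsto_const_nhds (x := Real.log p) (f := Filter.atTop (α := ℕ))) h0
    rwa [add_zero] at h2
  · filter_upwards [Filter.eventually_ge_atTop 1] with N hN
    obtain ⟨M, rfl⟩ := Nat.exists_eq_succ_of_ne_zero (by omega : N ≠ 0)
    show Real.log p ≤ ∑ k ∈ Finset.range (M+1),
        Real.log (((k : ℝ) + 1) / ((M+1 : ℕ) : ℝ)) * (((M+1) - 1).choose k : ℝ) *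
          p ^ k * (1 - p) ^ ((M+1) - 1 - k)
    rw [key M]
    exact (bounds p (1-p) hpq hp0 hq0 M).1
  · filter_upwards [Filter.eventually_ge_atTop 1] with N hN
    obtain ⟨M, rfl⟩ := Nat.exists_eq_succ_of_ne_zero (by omega : N ≠ 0)
    show (∑ k ∈ Finset.range (M+1),
        Real.log (((k : ℝ) + 1) / ((M+1 : ℕ) : ℝ)) * (((M+1) - 1).choose k : ℝ) *
          p ^ k * (1 - p) ^ ((M+1) - 1 - k)) ≤ Real.log p + (1-p)/(((M+1:ℕ):ℝ)*p)
    rw [key M]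
    have := (bounds p (1-p) hpq hp0 hq0 M).2
    have ec : ((M+1:ℕ):ℝ) = (M:ℝ)+1 := by push_cast; ring
    rw [ec]
    exact this
end

section
/- For every p ∈ (0,1] and every ε ∈ (0, p/2], liminf_{N→∞} Σ_{k ∈ {0,...,N−1}, k > εN} log((k+1)/N) · C(N−1,k) · p^k · (1−p)^{N−1−k} ≥ log p. -/
/-!
STATEMENT 8: For every `p ∈ (0,1]` and `ε ∈ (0, p/2]`,
`liminf_{N→∞} Σ_{k ∈ {0,...,N−1}, k > εN} log((k+1)/N) C(N−1,k) p^k (1−p)^{N−1−k} ≥ log p`.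
-/


open Finset

lemma sum_B (p : ℝ) (hp0 : 0 ≤ p) (hp1 : p ≤ 1) (n : ℕ) :
    ∑ k ∈ Finset.range (n+1), (n.choose k : ℝ) * p^k * (1-p)^(n-k) = 1 := by
  have := bernstein.probability n ⟨p, hp0, hp1⟩
  simp only [bernstein_apply] at this
  rw [Finset.sum_range]
  exact_mod_cast this

lemma sum_var (p : ℝ) (hp0 : 0 ≤ p) (hp1 : p ≤ 1) (n : ℕ) (hn : 1 ≤ n) :
    ∑ k ∈ Finset.range (n+1), (p - (k:ℝ)/n)^2 * ((n.choose k : ℝ) * p^k * (1-p)^(n-k))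
      = p * (1-p) / n := by
  have hn' : 0 < (n:ℝ) := by exact_mod_cast hn
  have := bernstein.variance (by omega : n ≠ 0) ⟨p, hp0, hp1⟩
  simp only [bernstein_apply, bernstein.z] at this
  rw [Finset.sum_range]
  exact_mod_cast this

lemma core (p q ε : ℝ) (hp0 : 0 < p) (hp1 : p ≤ 1) (hε0 : 0 < ε) (hεq : ε ≤ q)
    (hq1 : q ≤ 1) (hqp : q < p) (n : ℕ) (hn : 1 ≤ n) :
    Real.log q + Real.log ε * (p * (1-p) / (p-q)^2 / n) ≤
      ∑ k ∈ (Finset.range (n+1)).filter (fun k : ℕ => ε * ((n:ℝ)+1) < (k:ℝ)),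
        Real.log (((k:ℝ)+1)/((n:ℝ)+1)) * (n.choose k : ℝ) * p^k * (1-p)^(n-k) := by
  have hq0 : 0 < q := lt_of_lt_of_le hε0 hεq
  have hn' : 0 < (n:ℝ) := by exact_mod_cast hn
  set N : ℝ := (n:ℝ) + 1 with hNdef
  have hN0 : 0 < N := by positivity
  set B : ℕ → ℝ := fun k => (n.choose k : ℝ) * p^k * (1-p)^(n-k) with hBdef
  have hBnn : ∀ k, 0 ≤ B k := by
    intro k
    have : (0:ℝ) ≤ 1 - p := by linarith
    positivity
  set F : Finset ℕ := (Finset.range (n+1)).filter (fun k : ℕ => ε * N < (k:ℝ)) with hFdef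
  have hlogq0 : Real.log q ≤ 0 := Real.log_nonpos hq0.le hq1
  have hlogε0 : Real.log ε ≤ 0 := Real.log_nonpos hε0.le (le_trans hεq hq1)
  set d : ℝ := p - q with hddef
  have hd0 : 0 < d := by simp [hddef]; linarith
  -- Step 1: per-term bound
  have step1 : ∑ k ∈ F, (Real.log q * B k + Real.log ε * (if (k:ℝ)+1 < q*N then B k else 0))
      ≤ ∑ k ∈ F, Real.log (((k:ℝ)+1)/N) * (n.choose k : ℝ) * p^k * (1-p)^(n-k) := by
    apply Finset.sum_le_sum
    intro k hk
    simp only [hFdef, Finset.mem_filter, Finset.mem_range] at hk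
    have hrw : Real.log (((k:ℝ)+1)/N) * (n.choose k : ℝ) * p^k * (1-p)^(n-k)
        = Real.log (((k:ℝ)+1)/N) * B k := by simp [hBdef]; ring
    rw [hrw]
    by_cases h : (k:ℝ)+1 < q*N
    · simp only [h, if_true]
      have hεk : ε ≤ ((k:ℝ)+1)/N := by
        rw [le_div_iff₀ hN0]
        have : (k:ℝ) ≥ ε * N := le_of_lt hk.2
        linarith
      have l1 : Real.log ε ≤ Real.log (((k:ℝ)+1)/N) := Real.log_le_log hε0 hεk
      have l2 : Real.log ε * B k ≤ Real.log (((k:ℝ)+1)/N) * B k :=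
        mul_le_mul_of_nonneg_right l1 (hBnn k)
      have l3 : Real.log q * B k ≤ 0 := mul_nonpos_of_nonpos_of_nonneg hlogq0 (hBnn k)
      linarith
    · simp only [h, if_false, mul_zero, add_zero]
      have hqk : q ≤ ((k:ℝ)+1)/N := by
        rw [le_div_iff₀ hN0]
        linarith [not_lt.mp h]
      have l1 : Real.log q ≤ Real.log (((k:ℝ)+1)/N) := Real.log_le_log hq0 hqk
      exact mul_le_mul_of_nonneg_right l1 (hBnn k)
  -- Step 2: split the LHS sum
  have step2 : ∑ k ∈ F, (Real.log q * B k + Real.log ε * (if (k:ℝ)+1 < q*N then B k else 0))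
      = Real.log q * ∑ k ∈ F, B k
        + Real.log ε * ∑ k ∈ F.filter (fun k : ℕ => (k:ℝ)+1 < q*N), B k := by
    rw [Finset.sum_add_distrib, ← Finset.mul_sum, ← Finset.mul_sum]
    congr 1
    congr 1
    exact (Finset.sum_filter _ _).symm
  -- Step 3
  have hFsum1 : ∑ k ∈ F, B k ≤ 1 := by
    rw [← sum_B p hp0.le hp1 n]
    exact Finset.sum_le_sum_of_subset_of_nonneg (Finset.filter_subset _ _)
      (fun k _ _ => hBnn k)
  have step3 : Real.log q ≤ Real.log q * ∑ k ∈ F, B k := by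
    nlinarith [Finset.sum_nonneg (fun k (_ : k ∈ F) => hBnn k)]
  -- Step 5: Chebyshev
  have cheb : ∑ k ∈ F.filter (fun k : ℕ => (k:ℝ)+1 < q*N), B k ≤ p * (1-p) / d^2 / n := by
    have h1 : ∑ k ∈ F.filter (fun k : ℕ => (k:ℝ)+1 < q*N), B k
        ≤ ∑ k ∈ F.filter (fun k : ℕ => (k:ℝ)+1 < q*N), (p - (k:ℝ)/n)^2 / d^2 * B k := by
      apply Finset.sum_le_sum
      intro k hk
      simp only [Finset.mem_filter, hFdef, Finset.mem_range] at hk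
      have hkqn : (k:ℝ) < q * n := by
        have := hk.2
        have hqN : q * N = q * n + q := by rw [hNdef]; ring
        have : (k:ℝ) + 1 < q * n + q := by rw [← hqN]; exact hk.2
        linarith
      have hkn : (k:ℝ)/n < q := (div_lt_iff₀ hn').mpr (by linarith)
      have hdle : d ≤ p - (k:ℝ)/n := by simp [hddef]; linarith
      have hsq : d^2 ≤ (p - (k:ℝ)/n)^2 := pow_le_pow_left₀ hd0.le hdle 2
      have h1le : (1:ℝ) ≤ (p - (k:ℝ)/n)^2 / d^2 := (one_le_div (by positivity)).mpr hsq
      exact le_mul_of_one_le_left (hBnn k) h1le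
    have h2 : ∑ k ∈ F.filter (fun k : ℕ => (k:ℝ)+1 < q*N), (p - (k:ℝ)/n)^2 / d^2 * B k
        ≤ ∑ k ∈ Finset.range (n+1), (p - (k:ℝ)/n)^2 / d^2 * B k := by
      apply Finset.sum_le_sum_of_subset_of_nonneg
      · exact (Finset.filter_subset _ _).trans (Finset.filter_subset _ _)
      · intro k _ _
        have := hBnn k
        positivity
    have h3 : ∑ k ∈ Finset.range (n+1), (p - (k:ℝ)/n)^2 / d^2 * B k
        = (p * (1-p) / n) / d^2 := by
      rw [eq_div_iff (by positivity : (d:ℝ)^2 ≠ 0), Finset.sum_mul, ← sum_var p hp0.le hp1 n hn]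
      apply Finset.sum_congr rfl
      intro k _
      simp only [hBdef]
      field_simp
    have h4 : (p * (1-p) / n) / d^2 = p * (1-p) / d^2 / n := by ring
    linarith
  have step4 : Real.log ε * (p * (1-p) / d^2 / n)
      ≤ Real.log ε * ∑ k ∈ F.filter (fun k : ℕ => (k:ℝ)+1 < q*N), B k :=
    mul_le_mul_of_nonpos_left cheb hlogε0
  calc Real.log q + Real.log ε * (p * (1-p) / (p-q)^2 / n)
      ≤ Real.log q * ∑ k ∈ F, B k
        + Real.log ε * ∑ k ∈ F.filter (fun k : ℕ => (k:ℝ)+1 < q*N), B k := by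
        rw [← hddef]; exact add_le_add step3 step4
    _ = ∑ k ∈ F, (Real.log q * B k + Real.log ε * (if (k:ℝ)+1 < q*N then B k else 0)) :=
        step2.symm
    _ ≤ _ := step1

theorem stmt_8
    (p : ℝ) (hp : p ∈ Set.Ioc (0 : ℝ) 1)
    (ε : ℝ) (hε : ε ∈ Set.Ioc (0 : ℝ) (p / 2)) :
    Real.log p ≤
      Filter.liminf
        (fun N : ℕ =>
          ∑ k ∈ (Finset.range N).filter (fun k : ℕ => ε * (N : ℝ) < (k : ℝ)),
            Real.log (((k : ℝ) + 1) / (N : ℝ)) * ((N - 1).choose k : ℝ) *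
              p ^ k * (1 - p) ^ (N - 1 - k))
        Filter.atTop := by
  obtain ⟨hp0, hp1⟩ := hp
  obtain ⟨hε0, hεp⟩ := hε
  have hε1 : ε < p := by linarith
  -- every value of the sequence is ≤ 0
  have hS0 : ∀ N : ℕ,
      (∑ k ∈ (Finset.range N).filter (fun k : ℕ => ε * (N : ℝ) < (k : ℝ)),
        Real.log (((k : ℝ) + 1) / (N : ℝ)) * ((N - 1).choose k : ℝ) *
          p ^ k * (1 - p) ^ (N - 1 - k)) ≤ 0 := by
    intro N
    apply Finset.sum_nonpos
    intro k hk
    simp only [Finset.mem_filter, Finset.mem_range] at hk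
    have hNpos : 0 < N := Nat.pos_of_ne_zero (by rintro rfl; exact Nat.not_lt_zero k hk.1)
    have hN0 : (0:ℝ) < N := by exact_mod_cast hNpos
    have hk1 : (k:ℝ) + 1 ≤ N := by exact_mod_cast hk.1
    have hlog : Real.log (((k:ℝ)+1)/N) ≤ 0 :=
      Real.log_nonpos (by positivity) ((div_le_one hN0).mpr hk1)
    have hB : 0 ≤ ((N-1).choose k : ℝ) * p^k * (1-p)^(N-1-k) := by
      have h1p : (0:ℝ) ≤ 1-p := by linarith
      positivity
    calc Real.log (((k:ℝ)+1)/N) * ((N-1).choose k : ℝ) * p^k * (1-p)^(N-1-k)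
        = Real.log (((k:ℝ)+1)/N) * (((N-1).choose k : ℝ) * p^k * (1-p)^(N-1-k)) := by ring
      _ ≤ 0 := mul_nonpos_of_nonpos_of_nonneg hlog hB
  refine le_of_forall_lt fun c hc => ?_
  set c' := (c + Real.log p)/2 with hc'def
  have hcc' : c < c' := by rw [hc'def]; linarith
  have hc'p : c' < Real.log p := by rw [hc'def]; linarith
  set q := max (Real.exp c') ε with hqdef
  have hq0 : 0 < q := lt_of_lt_of_le (Real.exp_pos c') (le_max_left _ _)
  have hexp : Real.exp c' < p := by
    have := Real.exp_lt_exp.mpr hc'p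
    rwa [Real.exp_log hp0] at this
  have hqp : q < p := max_lt hexp hε1
  have hq1 : q ≤ 1 := hqp.le.trans hp1
  have hεq : ε ≤ q := le_max_right _ _
  have hc'q : c' ≤ Real.log q := by
    have := Real.log_le_log (Real.exp_pos c') (le_max_left (Real.exp c') ε)
    rwa [Real.log_exp] at this
  set g : ℕ → ℝ := fun n => Real.log q + Real.log ε * (p*(1-p)/(p-q)^2/(n:ℝ)) with hgdef
  have htend : Filter.Tendsto g Filter.atTop (nhds (Real.log q)) := by
    have h0 : Filter.Tendsto (fun n : ℕ => p*(1-p)/(p-q)^2/(n:ℝ)) Filter.atTop (nhds 0) :=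
      tendsto_const_div_atTop_nhds_zero_nat _
    have := (h0.const_mul (Real.log ε)).const_add (Real.log q)
    simpa using this
  have hcomp : Filter.Tendsto (fun N : ℕ => g (N-1)) Filter.atTop (nhds (Real.log q)) :=
    htend.comp (Filter.tendsto_sub_atTop_nat 1)
  have hlt : (c + c')/2 < Real.log q := by linarith
  have hev1 : ∀ᶠ N : ℕ in Filter.atTop, (c + c')/2 < g (N-1) :=
    hcomp.eventually (eventually_gt_nhds hlt)
  refine lt_of_lt_of_le (show c < (c+c')/2 by linarith) ?_
  apply Filter.le_liminf_of_le
  · exact Filter.isCoboundedUnder_ge_of_le _ hS0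
  · filter_upwards [hev1, Filter.eventually_ge_atTop 2] with N h1 hN2
    obtain ⟨n, rfl⟩ : ∃ n, N = n + 1 := ⟨N-1, by omega⟩
    have hn : 1 ≤ n := by omega
    have hcore := core p q ε hp0 hp1 hε0 hεq hq1 hqp n hn
    have hle : g n ≤ ∑ k ∈ (Finset.range (n+1)).filter
          (fun k : ℕ => ε * ((n+1:ℕ) : ℝ) < (k:ℝ)),
        Real.log (((k:ℝ)+1)/((n+1:ℕ):ℝ)) * (((n+1-1).choose k : ℕ) : ℝ) * p^k *
          (1-p)^(n+1-1-k) := by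
      simp only [Nat.add_sub_cancel, Nat.cast_add, Nat.cast_one, hgdef]
      exact hcore
    simp only [Nat.add_sub_cancel] at h1
    exact le_trans h1.le hle
end

section
/- For every p ∈ (0,1] and every ε ∈ (0, p/2], lim_{N→∞} Σ_{k ∈ {0,...,N−1}, k ≤ εN} log((k+1)/N) · C(N−1,k) · p^k · (1−p)^{N−1−k} = 0. -/
/-!
STATEMENT 9: For every `p ∈ (0,1]` and `ε ∈ (0, p/2]`,
`lim_{N→∞} Σ_{k ∈ {0,...,N−1}, k ≤ εN} log((k+1)/N) C(N−1,k) p^k (1−p)^{N−1−k} = 0`.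
-/

set_option maxHeartbeats 1000000 in
theorem stmt_9
    (p : ℝ) (hp : p ∈ Set.Ioc (0 : ℝ) 1)
    (ε : ℝ) (hε : ε ∈ Set.Ioc (0 : ℝ) (p / 2)) :
    Filter.Tendsto
      (fun N : ℕ =>
        ∑ k ∈ (Finset.range N).filter (fun k : ℕ => (k : ℝ) ≤ ε * (N : ℝ)),
          Real.log (((k : ℝ) + 1) / (N : ℝ)) * ((N - 1).choose k : ℝ) *
            p ^ k * (1 - p) ^ (N - 1 - k))
      Filter.atTop (nhds 0) := by
  obtain ⟨hp0, hp1⟩ := hp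
  obtain ⟨hε0, hε2⟩ := hε
  have hq1 : (0:ℝ) ≤ 1 - p := by linarith
  apply tendsto_of_tendsto_of_tendsto_of_le_of_le'
    (g := fun N : ℕ => -((16 / p) * (Real.log N / N))) (h := fun _ : ℕ => (0:ℝ))
  · have h1 : Filter.Tendsto (fun N : ℕ => Real.log N / N) Filter.atTop (nhds 0) :=
      (Real.isLittleO_log_id_atTop.tendsto_div_nhds_zero).comp tendsto_natCast_atTop_atTop
    have := (h1.const_mul (16 / p)).neg
    simpa using this
  · exact tendsto_const_nhds
  · -- lower bound, eventually for N ≥ 4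
    filter_upwards [Filter.eventually_ge_atTop 4] with N hN4
    set n := N - 1 with hn
    have hnN : (n:ℝ) = (N:ℝ) - 1 := by
      have h : (n:ℕ) + 1 = N := by omega
      push_cast [← h]; ring
    have hNpos : (0:ℝ) < N := by positivity
    have hlogN : 0 ≤ Real.log N := Real.log_natCast_nonneg N
    have hq : ∀ k : ℕ, (0:ℝ) ≤ (n.choose k : ℝ) * p ^ k * (1 - p) ^ (n - k) := by
      intro k; positivity
    have step1 : ∑ k ∈ (Finset.range N).filter (fun k : ℕ => (k : ℝ) ≤ ε * (N : ℝ)),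
          (-Real.log N) * ((n.choose k : ℝ) * p ^ k * (1 - p) ^ (n - k))
        ≤ ∑ k ∈ (Finset.range N).filter (fun k : ℕ => (k : ℝ) ≤ ε * (N : ℝ)),
          Real.log (((k : ℝ) + 1) / (N : ℝ)) * ((n).choose k : ℝ) *
            p ^ k * (1 - p) ^ (n - k) := by
      apply Finset.sum_le_sum
      intro k hk
      have hlog : -Real.log N ≤ Real.log (((k : ℝ) + 1) / (N : ℝ)) := by
        rw [Real.log_div (by positivity) (by positivity)]
        have h0 : 0 ≤ Real.log ((k:ℝ)+1) :=
          Real.log_nonneg (by linarith [Nat.cast_nonneg (α := ℝ) k])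
        linarith
      calc (-Real.log N) * ((n.choose k : ℝ) * p ^ k * (1 - p) ^ (n - k))
          ≤ Real.log (((k : ℝ) + 1) / (N : ℝ)) * ((n.choose k : ℝ) * p ^ k * (1 - p) ^ (n - k)) :=
            mul_le_mul_of_nonneg_right hlog (hq k)
        _ = Real.log (((k : ℝ) + 1) / (N : ℝ)) * (n.choose k : ℝ) * p ^ k * (1 - p) ^ (n - k) := by
            ring
    have step2 : ∑ k ∈ (Finset.range N).filter (fun k : ℕ => (k : ℝ) ≤ ε * (N : ℝ)),
          ((n.choose k : ℝ) * p ^ k * (1 - p) ^ (n - k)) ≤ 16 / (p * N) := by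
      have hvar : ∑ ν ∈ Finset.range (n+1), ((n:ℝ)*p - (ν:ℝ))^2 * ((n.choose ν : ℝ) * p^ν * (1-p)^(n-ν))
          = (n:ℝ) * p * (1 - p) := by
        have h := congrArg (Polynomial.eval p) (bernsteinPolynomial.variance (R := ℝ) n)
        simpa [bernsteinPolynomial, Polynomial.eval_finset_sum, mul_assoc] using h
      have hrange : n + 1 = N := by omega
      have key : ∀ k ∈ (Finset.range N).filter (fun k : ℕ => (k : ℝ) ≤ ε * (N : ℝ)),
          ((n.choose k : ℝ) * p ^ k * (1 - p) ^ (n - k))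
            ≤ (16 / (p^2 * N^2)) * (((n:ℝ)*p - (k:ℝ))^2 * ((n.choose k : ℝ) * p^k * (1-p)^(n-k))) := by
        intro k hk
        have hkε : (k:ℝ) ≤ ε * N := (Finset.mem_filter.mp hk).2
        have hN4' : (4:ℝ) ≤ N := by exact_mod_cast hN4
        have hgap : p * N / 4 ≤ (n:ℝ)*p - k := by
          rw [hnN]
          have h2 : (k:ℝ) ≤ (p/2) * N := le_trans hkε (by nlinarith)
          nlinarith
        have hsq : (p * N / 4)^2 ≤ ((n:ℝ)*p - k)^2 := by
          apply sq_le_sq' <;> nlinarith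
        have h16 : 1 ≤ (16 / (p^2 * N^2)) * ((n:ℝ)*p - (k:ℝ))^2 := by
          rw [div_mul_eq_mul_div, le_div_iff₀ (by positivity)]
          nlinarith
        calc (n.choose k : ℝ) * p ^ k * (1 - p) ^ (n - k)
            = 1 * ((n.choose k : ℝ) * p ^ k * (1 - p) ^ (n - k)) := by ring
          _ ≤ ((16 / (p^2 * N^2)) * ((n:ℝ)*p - (k:ℝ))^2) *
                ((n.choose k : ℝ) * p ^ k * (1 - p) ^ (n - k)) :=
              mul_le_mul_of_nonneg_right h16 (hq k)
          _ = (16 / (p^2 * N^2)) * (((n:ℝ)*p - (k:ℝ))^2 *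
                ((n.choose k : ℝ) * p^k * (1-p)^(n-k))) := by ring
      calc ∑ k ∈ (Finset.range N).filter (fun k : ℕ => (k : ℝ) ≤ ε * (N : ℝ)),
            ((n.choose k : ℝ) * p ^ k * (1 - p) ^ (n - k))
          ≤ ∑ k ∈ (Finset.range N).filter (fun k : ℕ => (k : ℝ) ≤ ε * (N : ℝ)),
            (16 / (p^2 * N^2)) * (((n:ℝ)*p - (k:ℝ))^2 * ((n.choose k : ℝ) * p^k * (1-p)^(n-k))) :=
            Finset.sum_le_sum key
        _ ≤ ∑ k ∈ Finset.range (n+1),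
            (16 / (p^2 * N^2)) * (((n:ℝ)*p - (k:ℝ))^2 * ((n.choose k : ℝ) * p^k * (1-p)^(n-k))) := by
            apply Finset.sum_le_sum_of_subset_of_nonneg
            · rw [hrange]; exact Finset.filter_subset _ _
            · intro k _ _; positivity
        _ = (16 / (p^2 * N^2)) * ((n:ℝ) * p * (1 - p)) := by rw [← Finset.mul_sum, hvar]
        _ ≤ 16 / (p * N) := by
            have hnle : (n:ℝ) ≤ N := by rw [hnN]; linarith
            have hb : (n:ℝ)*p*(1-p) ≤ (N:ℝ)*p := by
              nlinarith [mul_le_mul_of_nonneg_right hnle hp0.le,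
                mul_nonneg (mul_nonneg (Nat.cast_nonneg (α:=ℝ) n) hp0.le) hp0.le]
            calc 16 / (p^2 * (N:ℝ)^2) * ((n:ℝ) * p * (1 - p))
                ≤ 16 / (p^2 * (N:ℝ)^2) * ((N:ℝ)*p) :=
                  mul_le_mul_of_nonneg_left hb (by positivity)
              _ = 16 / (p * N) := by field_simp
    calc -((16/p) * (Real.log N / N)) = -Real.log N * (16/(p*N)) := by field_simp
      _ ≤ -Real.log N * (∑ k ∈ (Finset.range N).filter (fun k : ℕ => (k : ℝ) ≤ ε * (N : ℝ)),
            ((n.choose k : ℝ) * p ^ k * (1 - p) ^ (n - k))) :=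
          mul_le_mul_of_nonpos_left step2 (by linarith)
      _ = ∑ k ∈ (Finset.range N).filter (fun k : ℕ => (k : ℝ) ≤ ε * (N : ℝ)),
            (-Real.log N) * ((n.choose k : ℝ) * p ^ k * (1 - p) ^ (n - k)) := Finset.mul_sum _ _ _
      _ ≤ _ := step1
  · filter_upwards with N
    apply Finset.sum_nonpos
    intro k hk
    have hklt : k < N := Finset.mem_range.mp (Finset.mem_filter.mp hk).1
    have hN0 : (0:ℝ) < N := Nat.cast_pos.mpr (by omega)
    have hlog : Real.log (((k : ℝ) + 1) / (N : ℝ)) ≤ 0 := by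
      apply Real.log_nonpos (by positivity)
      rw [div_le_one hN0]
      exact_mod_cast hklt
    have heq : Real.log (((k : ℝ) + 1) / (N : ℝ)) * ((N - 1).choose k : ℝ) * p ^ k * (1 - p) ^ (N - 1 - k)
        = Real.log (((k : ℝ) + 1) / (N : ℝ)) * (((N - 1).choose k : ℝ) * p ^ k * (1 - p) ^ (N - 1 - k)) := by ring
    rw [heq]
    exact mul_nonpos_of_nonpos_of_nonneg hlog (by positivity)
end

section
/- In the KL-control setting, assume additionally that the initial probability vector satisfies P_0^i > 0 for all i, and let P*_t be the distributions induced by Q*: P*_0 = P_0 and P*_{t+1}^j = Σ_i P*_t^i Q*_t^{ij}. For each integer N ≥ 1, t ∈ {0,...,T−1} and i,j define Π_{N,t}^{ij} = α·[ Σ_{k=0}^{N−1} log((k+1)/N)·C(N−1,k)·(P*_t^i Q*_t^{ij})^k·(1−P*_t^i Q*_t^{ij})^{N−1−k} − Σ_{k=0}^{N−1} log((k+1)/N)·C(N−1,k)·(P*_t^i)^k·(1−P*_t^i)^{N−1−k} − log R_t^{ij} ]. Then there exists a sequence ε_N ≥ 0 with ε_N → 0 such that for every N ≥ 1 and every admissible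 policy {Q_t}_{t=0}^{T−1} with induced distributions P_t (starting from P_0): Σ_{t=0}^{T−1} Σ_{i,j} P_t^i Q_t^{ij} ( C_t^{ij} + Π_{N,t}^{ij} ) + ε_N ≥ Σ_{t=0}^{T−1} Σ_{i,j} P*_t^i Q*_t^{ij} ( C_t^{ij} + Π_{N,t}^{ij} ). That is, the symmetric profile in which every player uses Q* is an ε_N-Nash (mean-field) equilibrium of the N-player traffic routing game. -/
/-!
STATEMENT 11: In the KL-control setting with strictly positive initial distribution
`P_0`, let `P*` be the distributions induced by `Q*` and let `Π_{N,t}^{ij}` (here `Tax`)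
be the expected log-population tax when the other `N−1` players follow `Q*`. Then there
is a sequence `ε_N ≥ 0`, `ε_N → 0`, such that for every `N ≥ 1` and every admissible
policy `{Q_t}` with induced distributions `P_t` (from `P_0`):
`Σ_t Σ_{i,j} P_t^i Q_t^{ij} (C_t^{ij} + Π_{N,t}^{ij}) + ε_N
  ≥ Σ_t Σ_{i,j} P*_t^i Q*_t^{ij} (C_t^{ij} + Π_{N,t}^{ij})`,
i.e. the symmetric profile `Q*` is an `ε_N`-Nash (mean-field) equilibrium.
-/

private lemma binom_sum (n : ℕ) (p : ℝ) :
    ∑ k ∈ Finset.range (n+1), (n.choose k : ℝ) * p ^ k * (1 - p) ^ (n - k) = 1 := by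
  have h := add_pow p (1-p) n
  have h2 : p + (1-p) = 1 := by ring
  rw [h2, one_pow] at h
  calc ∑ k ∈ Finset.range (n+1), (n.choose k : ℝ) * p ^ k * (1 - p) ^ (n - k)
      = ∑ k ∈ Finset.range (n+1), p ^ k * (1-p) ^ (n-k) * (n.choose k : ℝ) :=
        Finset.sum_congr rfl fun k _ => by ring
    _ = 1 := h.symm

private lemma binom_mean (n : ℕ) (p : ℝ) :
    ∑ k ∈ Finset.range (n+1), (k : ℝ) * ((n.choose k : ℝ) * p ^ k * (1 - p) ^ (n - k))
      = n * p := by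
  cases n with
  | zero => simp
  | succ m =>
    rw [Finset.sum_range_succ']
    have key : ∀ i ∈ Finset.range (m+1),
        ((i+1 : ℕ) : ℝ) * (((m+1).choose (i+1) : ℝ) * p ^ (i+1) * (1-p) ^ (m+1-(i+1)))
        = ((m:ℝ)+1) * p * ((m.choose i : ℝ) * p ^ i * (1-p) ^ (m-i)) := by
      intro i _
      have h := Nat.add_one_mul_choose_eq m i
      have h' : ((m:ℝ)+1) * (m.choose i : ℝ) = ((m+1).choose (i+1) : ℝ) * ((i:ℝ)+1) := by
        exact_mod_cast h
      have he : m + 1 - (i+1) = m - i := by omega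
      rw [he, pow_succ]
      push_cast
      linear_combination (-(p ^ i * p * (1-p) ^ (m-i))) * h'
    rw [Finset.sum_congr rfl key, ← Finset.mul_sum, binom_sum]
    push_cast
    ring

private lemma binom_invmoment (n : ℕ) (p : ℝ) (hp : 0 < p) (hp1 : p ≤ 1) :
    ∑ k ∈ Finset.range (n+1),
        (n.choose k : ℝ) * p ^ k * (1 - p) ^ (n - k) / ((k:ℝ)+1)
      ≤ 1 / (((n:ℝ)+1) * p) := by
  have hnp : (0:ℝ) < ((n:ℝ)+1) * p := by positivity
  have key : ∀ k ∈ Finset.range (n+1),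
      (n.choose k : ℝ) * p ^ k * (1 - p) ^ (n - k) / ((k:ℝ)+1)
      = ((n+1).choose (k+1) : ℝ) * p ^ (k+1) * (1-p) ^ (n-k) / (((n:ℝ)+1) * p) := by
    intro k _
    have h := Nat.add_one_mul_choose_eq n k
    have h' : ((n:ℝ)+1) * (n.choose k : ℝ) = ((n+1).choose (k+1) : ℝ) * ((k:ℝ)+1) := by
      exact_mod_cast h
    rw [div_eq_div_iff (by positivity) hnp.ne']
    linear_combination (p ^ (k+1) * (1-p) ^ (n-k)) * h'
  rw [Finset.sum_congr rfl key, ← Finset.sum_div]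
  gcongr
  -- ⊢ ∑ k ∈ range (n+1), ((n+1).choose (k+1) : ℝ) * p^(k+1) * (1-p)^(n-k) ≤ 1
  have h1p : (0:ℝ) ≤ 1 - p := by linarith
  have hfull := binom_sum (n+1) p
  rw [Finset.sum_range_succ'] at hfull
  have hshift : ∀ k ∈ Finset.range (n+1),
      ((n+1).choose (k+1) : ℝ) * p ^ (k+1) * (1-p) ^ (n+1-(k+1))
      = ((n+1).choose (k+1) : ℝ) * p ^ (k+1) * (1-p) ^ (n-k) := by
    intro k _
    have he : n+1-(k+1) = n-k := by omega
    rw [he]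
  rw [Finset.sum_congr rfl hshift] at hfull
  have h0 : (0:ℝ) ≤ ((n+1).choose 0 : ℝ) * p ^ 0 * (1-p) ^ (n+1-0) := by positivity
  linarith

private lemma S_lower (n : ℕ) (p : ℝ) (hp : 0 < p) (hp1 : p ≤ 1) :
    Real.log p ≤ ∑ k ∈ Finset.range (n+1),
      Real.log (((k:ℝ)+1)/((n:ℝ)+1)) * ((n.choose k : ℝ) * p ^ k * (1-p) ^ (n-k)) := by
  set w : ℕ → ℝ := fun k => (n.choose k : ℝ) * p ^ k * (1-p) ^ (n-k) with hw
  have h1p : (0:ℝ) ≤ 1 - p := by linarith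
  have hwnn : ∀ k, 0 ≤ w k := fun k => by rw [hw]; positivity
  have hnp : (0:ℝ) < ((n:ℝ)+1) * p := by positivity
  have hstep : ∀ k ∈ Finset.range (n+1),
      (Real.log p + 1) * w k - (((n:ℝ)+1) * p) * (w k / ((k:ℝ)+1))
      ≤ Real.log (((k:ℝ)+1)/((n:ℝ)+1)) * w k := by
    intro k _
    have hk1 : (0:ℝ) < (k:ℝ)+1 := by positivity
    set a : ℝ := ((k:ℝ)+1) / (((n:ℝ)+1) * p) with ha
    have hapos : 0 < a := by positivity
    have hinv : a⁻¹ = (((n:ℝ)+1) * p) / ((k:ℝ)+1) := by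
      rw [ha]; field_simp
    have hlog : Real.log (((k:ℝ)+1)/((n:ℝ)+1)) = Real.log a + Real.log p := by
      rw [← Real.log_mul hapos.ne' hp.ne']
      congr 1
      rw [ha]; field_simp
    have hbd : 1 - (((n:ℝ)+1) * p) / ((k:ℝ)+1) ≤ Real.log a := by
      have := Real.one_sub_inv_le_log_of_pos hapos
      rwa [hinv] at this
    rw [hlog]
    have hexp : (Real.log p + 1) * w k - (((n:ℝ)+1) * p) * (w k / ((k:ℝ)+1))
        = (Real.log p + (1 - (((n:ℝ)+1) * p) / ((k:ℝ)+1))) * w k := by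
      field_simp
      ring
    rw [hexp]
    exact mul_le_mul_of_nonneg_right (by linarith) (hwnn k)
  have hsum := Finset.sum_le_sum hstep
  rw [Finset.sum_sub_distrib, ← Finset.mul_sum, ← Finset.mul_sum] at hsum
  have hS := binom_sum n p
  have hI := binom_invmoment n p hp hp1
  have hIle : (((n:ℝ)+1) * p) * (∑ k ∈ Finset.range (n+1), w k / ((k:ℝ)+1))
      ≤ (((n:ℝ)+1) * p) * (1 / (((n:ℝ)+1) * p)) :=
    mul_le_mul_of_nonneg_left hI hnp.le
  rw [mul_one_div, div_self hnp.ne'] at hIle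
  have hwsum : ∑ k ∈ Finset.range (n+1), w k = 1 := hS
  rw [hwsum, mul_one] at hsum
  linarith

private lemma S_upper (n : ℕ) (p : ℝ) (hp : 0 < p) (hp1 : p ≤ 1) :
    ∑ k ∈ Finset.range (n+1),
      Real.log (((k:ℝ)+1)/((n:ℝ)+1)) * ((n.choose k : ℝ) * p ^ k * (1-p) ^ (n-k))
      ≤ Real.log p + 1 / (((n:ℝ)+1) * p) := by
  set w : ℕ → ℝ := fun k => (n.choose k : ℝ) * p ^ k * (1-p) ^ (n-k) with hw
  have h1p : (0:ℝ) ≤ 1 - p := by linarith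
  have hwnn : ∀ k, 0 ≤ w k := fun k => by rw [hw]; positivity
  have hnp : (0:ℝ) < ((n:ℝ)+1) * p := by positivity
  have hstep : ∀ k ∈ Finset.range (n+1),
      Real.log (((k:ℝ)+1)/((n:ℝ)+1)) * w k
      ≤ (Real.log p - 1) * w k + (((k:ℝ)+1) / (((n:ℝ)+1) * p)) * w k := by
    intro k _
    have hk1 : (0:ℝ) < (k:ℝ)+1 := by positivity
    set a : ℝ := ((k:ℝ)+1) / (((n:ℝ)+1) * p) with ha
    have hapos : 0 < a := by positivity
    have hlog : Real.log (((k:ℝ)+1)/((n:ℝ)+1)) = Real.log a + Real.log p := by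
      rw [← Real.log_mul hapos.ne' hp.ne']
      congr 1
      rw [ha]; field_simp
    have hbd : Real.log a ≤ a - 1 := Real.log_le_sub_one_of_pos hapos
    rw [hlog]
    have : Real.log a + Real.log p ≤ Real.log p - 1 + a := by linarith
    calc (Real.log a + Real.log p) * w k ≤ (Real.log p - 1 + a) * w k :=
          mul_le_mul_of_nonneg_right this (hwnn k)
      _ = (Real.log p - 1) * w k + a * w k := by ring
  have hsum := Finset.sum_le_sum hstep
  rw [Finset.sum_add_distrib, ← Finset.mul_sum] at hsum
  have hwsum : ∑ k ∈ Finset.range (n+1), w k = 1 := binom_sum n p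
  rw [hwsum, mul_one] at hsum
  -- second sum: ∑ ((k+1)/((n+1)p)) * w k = (∑ (k+1) w k)/((n+1)p) = (np+1)/((n+1)p)
  have hmean : ∑ k ∈ Finset.range (n+1), (((k:ℝ)+1) / (((n:ℝ)+1) * p)) * w k
      = ((n:ℝ) * p + 1) / (((n:ℝ)+1) * p) := by
    have : ∀ k ∈ Finset.range (n+1), (((k:ℝ)+1) / (((n:ℝ)+1) * p)) * w k
        = ((k:ℝ) * w k + w k) / (((n:ℝ)+1) * p) := by
      intro k _; field_simp
    rw [Finset.sum_congr rfl this, ← Finset.sum_div, Finset.sum_add_distrib,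
      binom_mean n p, hwsum]
  rw [hmean] at hsum
  have hfinal : ((n:ℝ) * p + 1) / (((n:ℝ)+1) * p) - 1 ≤ 1 / (((n:ℝ)+1) * p) := by
    rw [div_sub_one hnp.ne', div_le_div_iff₀ hnp hnp]
    nlinarith
  linarith

private lemma telescope_sum (V : ℕ) (T : ℕ) (g : ℕ → Fin V → ℝ)
    (c : ℕ → Fin V → Fin V → ℝ)
    (Q : ℕ → Fin V → Fin V → ℝ) (P : ℕ → Fin V → ℝ)
    (hc : ∀ t, t < T → ∀ i j, c t i j = g (t+1) j - g t i)
    (hQsum : ∀ t, t < T → ∀ i, ∑ j, Q t i j = 1)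
    (hP : ∀ t, t < T → ∀ j, P (t+1) j = ∑ i, P t i * Q t i j) :
    ∑ t ∈ Finset.range T, ∑ i, ∑ j, P t i * Q t i j * c t i j
      = (∑ i, P T i * g T i) - ∑ i, P 0 i * g 0 i := by
  induction T with
  | zero => simp
  | succ T ih =>
    rw [Finset.sum_range_succ,
      ih (fun t ht => hc t (Nat.lt_succ_of_lt ht))
        (fun t ht => hQsum t (Nat.lt_succ_of_lt ht))
        (fun t ht => hP t (Nat.lt_succ_of_lt ht))]
    have hTT : T < T + 1 := Nat.lt_succ_self T
    have h1 : ∀ i j, P T i * Q T i j * c T i j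
        = P T i * Q T i j * g (T+1) j - P T i * Q T i j * g T i := by
      intro i j; rw [hc T hTT]; ring
    have h2 : ∑ i, ∑ j, P T i * Q T i j * g (T+1) j
        = ∑ j, P (T+1) j * g (T+1) j := by
      rw [Finset.sum_comm]
      refine Finset.sum_congr rfl fun j _ => ?_
      rw [hP T hTT j, Finset.sum_mul]
    have h3 : ∑ i, ∑ j, P T i * Q T i j * g T i = ∑ i, P T i * g T i := by
      refine Finset.sum_congr rfl fun i _ => ?_
      calc ∑ j, P T i * Q T i j * g T i = P T i * g T i * ∑ j, Q T i j := by
            rw [Finset.mul_sum]; exact Finset.sum_congr rfl fun j _ => by ring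
        _ = P T i * g T i := by rw [hQsum T hTT i, mul_one]
    simp only [h1, Finset.sum_sub_distrib]
    rw [h2, h3]
    ring

set_option maxHeartbeats 1000000 in
theorem stmt_11
    (V T : ℕ) (hV : 1 ≤ V) (hT : 1 ≤ T)
    (α : ℝ) (hα : 0 < α)
    (C R : ℕ → Fin V → Fin V → ℝ)
    (hRpos : ∀ t, t < T → ∀ i j, 0 < R t i j)
    (hRsum : ∀ t, t < T → ∀ i, ∑ j, R t i j = 1)
    (φ : ℕ → Fin V → ℝ)
    (hφT : ∀ i, φ T i = 1)
    (hφ : ∀ t, t < T → ∀ i,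
      φ t i = ∑ j, R t i j * Real.exp (-(C t i j) / α) * φ (t + 1) j)
    (Qstar : ℕ → Fin V → Fin V → ℝ)
    (hQstar : ∀ t, t < T → ∀ i j,
      Qstar t i j = φ (t + 1) j / φ t i * R t i j * Real.exp (-(C t i j) / α))
    (P0 : Fin V → ℝ) (hP0pos : ∀ i, 0 < P0 i) (hP0sum : ∑ i, P0 i = 1)
    (Pstar : ℕ → Fin V → ℝ) (hPstar0 : Pstar 0 = P0)
    (hPstar : ∀ t, t < T → ∀ j, Pstar (t + 1) j = ∑ i, Pstar t i * Qstar t i j)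
    (Tax : ℕ → ℕ → Fin V → Fin V → ℝ)
    (hTax : ∀ N t i j, Tax N t i j =
      α * ((∑ k ∈ Finset.range N,
              Real.log (((k : ℝ) + 1) / (N : ℝ)) * ((N - 1).choose k : ℝ) *
                (Pstar t i * Qstar t i j) ^ k *
                (1 - Pstar t i * Qstar t i j) ^ (N - 1 - k))
         - (∑ k ∈ Finset.range N,
              Real.log (((k : ℝ) + 1) / (N : ℝ)) * ((N - 1).choose k : ℝ) *
                (Pstar t i) ^ k * (1 - Pstar t i) ^ (N - 1 - k))
         - Real.log (R t i j))) :
    ∃ ε : ℕ → ℝ, (∀ N, 0 ≤ ε N) ∧ Filter.Tendsto ε Filter.atTop (nhds 0) ∧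
      ∀ N : ℕ, 1 ≤ N →
        ∀ (Q : ℕ → Fin V → Fin V → ℝ) (P : ℕ → Fin V → ℝ),
          (∀ t, t < T → ∀ i j, 0 ≤ Q t i j) →
          (∀ t, t < T → ∀ i, ∑ j, Q t i j = 1) →
          P 0 = P0 →
          (∀ t, t < T → ∀ j, P (t + 1) j = ∑ i, P t i * Q t i j) →
          ∑ t ∈ Finset.range T, ∑ i, ∑ j,
              Pstar t i * Qstar t i j * (C t i j + Tax N t i j)
            ≤ (∑ t ∈ Finset.range T, ∑ i, ∑ j,
                P t i * Q t i j * (C t i j + Tax N t i j)) + ε N := by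
  haveI : Nonempty (Fin V) := ⟨⟨0, by omega⟩⟩
  -- positivity of φ
  have hφpos : ∀ t, t ≤ T → ∀ i, 0 < φ t i := by
    have key : ∀ d t, t + d = T → ∀ i, 0 < φ t i := by
      intro d
      induction d with
      | zero =>
        intro t ht i
        rw [Nat.add_zero] at ht; subst ht
        rw [hφT]; norm_num
      | succ d ih =>
        intro t ht i
        have htT : t < T := by omega
        rw [hφ t htT]
        refine Finset.sum_pos (fun j _ => ?_) Finset.univ_nonempty
        exact mul_pos (mul_pos (hRpos t htT i j) (Real.exp_pos _))
          (ih (t+1) (by omega) j)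
    intro t ht i; exact key (T - t) t (by omega) i
  have hQspos : ∀ t, t < T → ∀ i j, 0 < Qstar t i j := by
    intro t ht i j
    rw [hQstar t ht i j]
    exact mul_pos (mul_pos (div_pos (hφpos (t+1) (by omega) j) (hφpos t ht.le i))
      (hRpos t ht i j)) (Real.exp_pos _)
  have hQssum : ∀ t, t < T → ∀ i, ∑ j, Qstar t i j = 1 := by
    intro t ht i
    have hφi := (hφpos t ht.le i).ne'
    calc ∑ j, Qstar t i j
        = ∑ j, R t i j * Real.exp (-(C t i j)/α) * φ (t+1) j / φ t i := by
          refine Finset.sum_congr rfl fun j _ => ?_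
          rw [hQstar t ht i j]
          field_simp
      _ = (∑ j, R t i j * Real.exp (-(C t i j)/α) * φ (t+1) j) / φ t i :=
          (Finset.sum_div _ _ _).symm
      _ = 1 := by rw [← hφ t ht i]; exact div_self hφi
  -- generic distribution facts
  have dist : ∀ (Q : ℕ → Fin V → Fin V → ℝ) (P : ℕ → Fin V → ℝ),
      (∀ t, t < T → ∀ i j, 0 ≤ Q t i j) →
      (∀ t, t < T → ∀ i, ∑ j, Q t i j = 1) →
      P 0 = P0 →
      (∀ t, t < T → ∀ j, P (t+1) j = ∑ i, P t i * Q t i j) →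
      ∀ t, t ≤ T → (∀ i, 0 ≤ P t i) ∧ (∑ i, P t i = 1) := by
    intro Q P hQnn hQsum hP0' hPrec t
    induction t with
    | zero =>
      intro _
      rw [hP0']
      exact ⟨fun i => (hP0pos i).le, hP0sum⟩
    | succ t ih =>
      intro ht
      have ht' : t < T := by omega
      obtain ⟨h1, h2⟩ := ih (by omega)
      refine ⟨fun j => ?_, ?_⟩
      · rw [hPrec t ht' j]
        exact Finset.sum_nonneg fun i _ => mul_nonneg (h1 i) (hQnn t ht' i j)
      · calc ∑ j, P (t+1) j = ∑ j, ∑ i, P t i * Q t i j :=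
              Finset.sum_congr rfl fun j _ => hPrec t ht' j
          _ = ∑ i, ∑ j, P t i * Q t i j := Finset.sum_comm
          _ = ∑ i, P t i * ∑ j, Q t i j :=
              Finset.sum_congr rfl fun i _ => (Finset.mul_sum _ _ _).symm
          _ = ∑ i, P t i := Finset.sum_congr rfl fun i _ => by
              rw [hQsum t ht' i, mul_one]
          _ = 1 := h2
  have hPsnn := dist Qstar Pstar (fun t ht i j => (hQspos t ht i j).le) hQssum
    hPstar0 hPstar
  have hPspos : ∀ t, t ≤ T → ∀ i, 0 < Pstar t i := by
    intro t
    induction t with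
    | zero => intro _ i; rw [hPstar0]; exact hP0pos i
    | succ t ih =>
      intro ht i
      have ht' : t < T := by omega
      rw [hPstar t ht' i]
      exact Finset.sum_pos (fun i' _ => mul_pos (ih (by omega) i') (hQspos t ht' i' i))
        Finset.univ_nonempty
  have hPsle1 : ∀ t, t < T → ∀ i, Pstar t i ≤ 1 := by
    intro t ht i
    obtain ⟨hnn, hsum⟩ := hPsnn t ht.le
    calc Pstar t i ≤ ∑ i', Pstar t i' :=
          Finset.single_le_sum (fun i' _ => hnn i') (Finset.mem_univ i)
      _ = 1 := hsum
  have hQsle1 : ∀ t, t < T → ∀ i j, Qstar t i j ≤ 1 := by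
    intro t ht i j
    calc Qstar t i j ≤ ∑ j', Qstar t i j' :=
          Finset.single_le_sum (fun j' _ => (hQspos t ht i j').le) (Finset.mem_univ j)
      _ = 1 := hQssum t ht i
  -- uniform positive lower bound m
  set s : Finset (ℕ × Fin V × Fin V) :=
    Finset.range T ×ˢ (Finset.univ : Finset (Fin V × Fin V)) with hs_def
  have hs : s.Nonempty := by
    refine ⟨(0, Classical.arbitrary (Fin V), Classical.arbitrary (Fin V)), ?_⟩
    simp only [hs_def, Finset.mem_product, Finset.mem_range, Finset.mem_univ, and_true]
    omega
  set m : ℝ := s.inf' hs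
    (fun x => min (Pstar x.1 x.2.1) (Pstar x.1 x.2.1 * Qstar x.1 x.2.1 x.2.2)) with hm_def
  have hmem : ∀ t, t < T → ∀ i j : Fin V, (t, i, j) ∈ s := by
    intro t ht i j
    simp only [hs_def, Finset.mem_product, Finset.mem_range, Finset.mem_univ, and_true]
    exact ht
  have hm_pos : 0 < m := by
    rw [hm_def, Finset.lt_inf'_iff]
    rintro ⟨t, i, j⟩ hx
    have htT : t < T := by
      simp only [hs_def, Finset.mem_product, Finset.mem_range] at hx
      exact hx.1
    exact lt_min (hPspos t htT.le i) (mul_pos (hPspos t htT.le i) (hQspos t htT i j))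
  have hm_leP : ∀ t, t < T → ∀ i, m ≤ Pstar t i := by
    intro t ht i
    exact le_trans (Finset.inf'_le _ (hmem t ht i i)) (min_le_left _ _)
  have hm_leQ : ∀ t, t < T → ∀ i j, m ≤ Pstar t i * Qstar t i j := by
    intro t ht i j
    exact le_trans (Finset.inf'_le _ (hmem t ht i j)) (min_le_right _ _)
  refine ⟨fun N => 2 * T * α / m / N, fun N => by positivity,
    tendsto_const_div_atTop_nhds_zero_nat _, ?_⟩
  intro N hN Q P hQnn hQsum hP0' hPrec
  obtain ⟨n, rfl⟩ : ∃ n, N = n + 1 := ⟨N - 1, by omega⟩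
  have hPQnn := dist Q P hQnn hQsum hP0' hPrec
  -- the limiting tax and value function
  set g : ℕ → Fin V → ℝ := fun t i => α * Real.log (φ t i) with hg
  have hgT : ∀ i, g T i = 0 := by intro i; simp [hg, hφT]
  set b : ℝ := α / (((n:ℝ)+1) * m) with hb_def
  have hnm : (0:ℝ) < ((n:ℝ)+1) * m := by positivity
  -- restated binomial bounds
  have hS : ∀ x : ℝ, 0 < x → x ≤ 1 →
      Real.log x ≤ (∑ k ∈ Finset.range (n+1),
          Real.log (((k:ℝ)+1)/((n:ℝ)+1)) * (n.choose k : ℝ) * x ^ k * (1-x) ^ (n-k))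
      ∧ (∑ k ∈ Finset.range (n+1),
          Real.log (((k:ℝ)+1)/((n:ℝ)+1)) * (n.choose k : ℝ) * x ^ k * (1-x) ^ (n-k))
        ≤ Real.log x + 1 / (((n:ℝ)+1) * x) := by
    intro x hx hx1
    have e : (∑ k ∈ Finset.range (n+1),
        Real.log (((k:ℝ)+1)/((n:ℝ)+1)) * (n.choose k : ℝ) * x ^ k * (1-x) ^ (n-k))
        = ∑ k ∈ Finset.range (n+1),
          Real.log (((k:ℝ)+1)/((n:ℝ)+1)) * ((n.choose k : ℝ) * x ^ k * (1-x) ^ (n-k)) :=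
      Finset.sum_congr rfl fun k _ => by ring
    rw [e]
    exact ⟨S_lower n x hx hx1, S_upper n x hx hx1⟩
  -- key pointwise tax bounds
  have taxbd : ∀ t, t < T → ∀ i j,
      Tax (n+1) t i j ≤ (g (t+1) j - g t i - C t i j) + b ∧
      (g (t+1) j - g t i - C t i j) - b ≤ Tax (n+1) t i j := by
    intro t ht i j
    have hp : 0 < Pstar t i := hPspos t ht.le i
    have hp1 : Pstar t i ≤ 1 := hPsle1 t ht i
    have hq : 0 < Pstar t i * Qstar t i j := mul_pos hp (hQspos t ht i j)
    have hq1 : Pstar t i * Qstar t i j ≤ 1 := by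
      have h := hQsle1 t ht i j
      have h2 := (hQspos t ht i j).le
      nlinarith
    obtain ⟨hA_low, hA_up⟩ := hS (Pstar t i * Qstar t i j) hq hq1
    obtain ⟨hB_low, hB_up⟩ := hS (Pstar t i) hp hp1
    have hTaxEq : Tax (n+1) t i j =
        α * ((∑ k ∈ Finset.range (n+1),
              Real.log (((k:ℝ)+1)/((n:ℝ)+1)) * (n.choose k : ℝ)
                * (Pstar t i * Qstar t i j) ^ k
                * (1 - Pstar t i * Qstar t i j) ^ (n-k))
          - (∑ k ∈ Finset.range (n+1),
              Real.log (((k:ℝ)+1)/((n:ℝ)+1)) * (n.choose k : ℝ)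
                * (Pstar t i) ^ k * (1 - Pstar t i) ^ (n-k))
          - Real.log (R t i j)) := by
      rw [hTax (n+1) t i j]
      norm_num
    -- the limiting tax identity
    have hQl : Real.log (Qstar t i j) =
        Real.log (φ (t+1) j) - Real.log (φ t i) + Real.log (R t i j) + (-(C t i j)/α) := by
      rw [hQstar t ht i j,
        Real.log_mul (mul_pos (div_pos (hφpos (t+1) (by omega) j) (hφpos t ht.le i))
          (hRpos t ht i j)).ne' (Real.exp_ne_zero _),
        Real.log_mul (div_pos (hφpos (t+1) (by omega) j) (hφpos t ht.le i)).ne'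
          (hRpos t ht i j).ne',
        Real.log_div (hφpos (t+1) (by omega) j).ne' (hφpos t ht.le i).ne',
        Real.log_exp]
    have hlogq : Real.log (Pstar t i * Qstar t i j)
        = Real.log (Pstar t i) + Real.log (Qstar t i j) :=
      Real.log_mul hp.ne' (hQspos t ht i j).ne'
    have htau : g (t+1) j - g t i - C t i j =
        α * (Real.log (Pstar t i * Qstar t i j) - Real.log (Pstar t i)
          - Real.log (R t i j)) := by
      rw [hlogq, hQl]
      show α * Real.log (φ (t+1) j) - α * Real.log (φ t i) - C t i j = _
      field_simp
      ring
    have hc1 : 1 / (((n:ℝ)+1) * (Pstar t i * Qstar t i j)) ≤ 1 / (((n:ℝ)+1) * m) := by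
      apply one_div_le_one_div_of_le hnm
      exact mul_le_mul_of_nonneg_left (hm_leQ t ht i j) (by positivity)
    have hc2 : 1 / (((n:ℝ)+1) * Pstar t i) ≤ 1 / (((n:ℝ)+1) * m) := by
      apply one_div_le_one_div_of_le hnm
      exact mul_le_mul_of_nonneg_left (hm_leP t ht i) (by positivity)
    rw [hTaxEq, htau]
    have hbb : b = α * (1 / (((n:ℝ)+1) * m)) := by rw [hb_def]; ring
    set A := (∑ k ∈ Finset.range (n+1),
        Real.log (((k:ℝ)+1)/((n:ℝ)+1)) * (n.choose k : ℝ)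
          * (Pstar t i * Qstar t i j) ^ k
          * (1 - Pstar t i * Qstar t i j) ^ (n-k)) with hA_def
    set B := (∑ k ∈ Finset.range (n+1),
        Real.log (((k:ℝ)+1)/((n:ℝ)+1)) * (n.choose k : ℝ)
          * (Pstar t i) ^ k * (1 - Pstar t i) ^ (n-k)) with hB_def
    have hX2 : A - Real.log (Pstar t i * Qstar t i j) ≤ 1 / (((n:ℝ)+1) * m) := by
      linarith
    have hY2 : B - Real.log (Pstar t i) ≤ 1 / (((n:ℝ)+1) * m) := by linarith
    have hX1 : 0 ≤ A - Real.log (Pstar t i * Qstar t i j) := by linarith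
    have hY1 : 0 ≤ B - Real.log (Pstar t i) := by linarith
    have hmul1 := mul_le_mul_of_nonneg_left hX2 hα.le
    have hmul2 := mul_le_mul_of_nonneg_left hY2 hα.le
    have hmul3 := mul_nonneg hα.le hX1
    have hmul4 := mul_nonneg hα.le hY1
    constructor
    · linarith [hmul1, hmul4]
    · linarith [hmul2, hmul3]
  -- telescoping value
  set cc : ℕ → Fin V → Fin V → ℝ := fun t i j => g (t+1) j - g t i with hcc
  have hbase : ∀ (Q' : ℕ → Fin V → Fin V → ℝ) (P' : ℕ → Fin V → ℝ),
      (∀ t, t < T → ∀ i, ∑ j, Q' t i j = 1) →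
      P' 0 = P0 →
      (∀ t, t < T → ∀ j, P' (t+1) j = ∑ i, P' t i * Q' t i j) →
      ∑ t ∈ Finset.range T, ∑ i, ∑ j, P' t i * Q' t i j * cc t i j
        = - ∑ i, P0 i * g 0 i := by
    intro Q' P' hQ'sum hP'0 hP'rec
    rw [telescope_sum V T g cc Q' P' (fun t ht i j => rfl) hQ'sum hP'rec]
    have h1 : ∑ i, P' T i * g T i = 0 :=
      Finset.sum_eq_zero fun i _ => by rw [hgT i, mul_zero]
    have h2 : ∑ i, P' 0 i * g 0 i = ∑ i, P0 i * g 0 i :=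
      Finset.sum_congr rfl fun i _ => by rw [hP'0]
    rw [h1, h2]; ring
  have hbaseQ := hbase Q P hQsum hP0' hPrec
  have hbaseS := hbase Qstar Pstar hQssum hPstar0 hPstar
  -- per-time-step bounds
  have hPQ1 : ∀ (Q' : ℕ → Fin V → Fin V → ℝ) (P' : ℕ → Fin V → ℝ),
      (∀ t, t < T → ∀ i, ∑ j, Q' t i j = 1) →
      (∀ t, t ≤ T → (∀ i, 0 ≤ P' t i) ∧ (∑ i, P' t i = 1)) →
      ∀ t, t < T → ∑ i, ∑ j, P' t i * Q' t i j = 1 := by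
    intro Q' P' hQ'sum hP'f t ht
    calc ∑ i, ∑ j, P' t i * Q' t i j = ∑ i, P' t i * ∑ j, Q' t i j :=
          Finset.sum_congr rfl fun i _ => (Finset.mul_sum _ _ _).symm
      _ = ∑ i, P' t i := Finset.sum_congr rfl fun i _ => by rw [hQ'sum t ht i, mul_one]
      _ = 1 := (hP'f t ht.le).2
  have hPQsumS := hPQ1 Qstar Pstar hQssum hPsnn
  have hPQsumQ := hPQ1 Q P hQsum hPQnn
  have hup : ∀ t ∈ Finset.range T,
      ∑ i, ∑ j, Pstar t i * Qstar t i j * (C t i j + Tax (n+1) t i j)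
      ≤ (∑ i, ∑ j, Pstar t i * Qstar t i j * cc t i j) + b := by
    intro t htm
    have ht : t < T := Finset.mem_range.mp htm
    have step : ∀ i j, Pstar t i * Qstar t i j * (C t i j + Tax (n+1) t i j)
        ≤ Pstar t i * Qstar t i j * cc t i j + Pstar t i * Qstar t i j * b := by
      intro i j
      have hnn : 0 ≤ Pstar t i * Qstar t i j :=
        (mul_pos (hPspos t ht.le i) (hQspos t ht i j)).le
      have h1 := (taxbd t ht i j).1
      have h2 : C t i j + Tax (n+1) t i j ≤ cc t i j + b := by
        simp only [hcc]; linarith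
      nlinarith [mul_le_mul_of_nonneg_left h2 hnn]
    calc ∑ i, ∑ j, Pstar t i * Qstar t i j * (C t i j + Tax (n+1) t i j)
        ≤ ∑ i, ∑ j, (Pstar t i * Qstar t i j * cc t i j + Pstar t i * Qstar t i j * b) :=
          Finset.sum_le_sum fun i _ => Finset.sum_le_sum fun j _ => step i j
      _ = (∑ i, ∑ j, Pstar t i * Qstar t i j * cc t i j)
            + (∑ i, ∑ j, Pstar t i * Qstar t i j) * b := by
          simp only [Finset.sum_add_distrib, Finset.sum_mul]
      _ = (∑ i, ∑ j, Pstar t i * Qstar t i j * cc t i j) + b := by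
          rw [hPQsumS t ht, one_mul]
  have hlow : ∀ t ∈ Finset.range T,
      (∑ i, ∑ j, P t i * Q t i j * cc t i j) - b
      ≤ ∑ i, ∑ j, P t i * Q t i j * (C t i j + Tax (n+1) t i j) := by
    intro t htm
    have ht : t < T := Finset.mem_range.mp htm
    have step : ∀ i j, P t i * Q t i j * cc t i j - P t i * Q t i j * b
        ≤ P t i * Q t i j * (C t i j + Tax (n+1) t i j) := by
      intro i j
      have hnn : 0 ≤ P t i * Q t i j :=
        mul_nonneg ((hPQnn t ht.le).1 i) (hQnn t ht i j)
      have h1 := (taxbd t ht i j).2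
      have h2 : cc t i j - b ≤ C t i j + Tax (n+1) t i j := by
        simp only [hcc]; linarith
      nlinarith [mul_le_mul_of_nonneg_left h2 hnn]
    have e : ∑ i, ∑ j, (P t i * Q t i j * cc t i j - P t i * Q t i j * b)
        = (∑ i, ∑ j, P t i * Q t i j * cc t i j) - (∑ i, ∑ j, P t i * Q t i j) * b := by
      simp only [Finset.sum_sub_distrib, Finset.sum_mul]
    calc (∑ i, ∑ j, P t i * Q t i j * cc t i j) - b
        = ∑ i, ∑ j, (P t i * Q t i j * cc t i j - P t i * Q t i j * b) := by
          rw [e, hPQsumQ t ht, one_mul]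
      _ ≤ ∑ i, ∑ j, P t i * Q t i j * (C t i j + Tax (n+1) t i j) :=
          Finset.sum_le_sum fun i _ => Finset.sum_le_sum fun j _ => step i j
  have h1 : ∑ t ∈ Finset.range T, ∑ i, ∑ j,
      Pstar t i * Qstar t i j * (C t i j + Tax (n+1) t i j)
      ≤ (- ∑ i, P0 i * g 0 i) + T * b := by
    calc ∑ t ∈ Finset.range T, ∑ i, ∑ j,
          Pstar t i * Qstar t i j * (C t i j + Tax (n+1) t i j)
        ≤ ∑ t ∈ Finset.range T,
            ((∑ i, ∑ j, Pstar t i * Qstar t i j * cc t i j) + b) :=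
          Finset.sum_le_sum hup
      _ = (- ∑ i, P0 i * g 0 i) + T * b := by
          rw [Finset.sum_add_distrib, hbaseS, Finset.sum_const, Finset.card_range,
            nsmul_eq_mul]
  have h2 : (- ∑ i, P0 i * g 0 i) - T * b
      ≤ ∑ t ∈ Finset.range T, ∑ i, ∑ j,
          P t i * Q t i j * (C t i j + Tax (n+1) t i j) := by
    calc (- ∑ i, P0 i * g 0 i) - T * b
        = ∑ t ∈ Finset.range T, ((∑ i, ∑ j, P t i * Q t i j * cc t i j) - b) := by
          rw [Finset.sum_sub_distrib, hbaseQ, Finset.sum_const, Finset.card_range,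
            nsmul_eq_mul]
      _ ≤ _ := Finset.sum_le_sum hlow
  have hn0 : ((n:ℝ)+1) ≠ 0 := by positivity
  have heps : 2 * (T:ℝ) * α / m / ((n+1 : ℕ) : ℝ) = 2 * T * b := by
    rw [hb_def]
    push_cast
    field_simp
  show _ ≤ _ + 2 * (T:ℝ) * α / m / ((n+1 : ℕ) : ℝ)
  rw [heps]
  linarith [h1, h2]
end

section
/- Let J ≥ 1 and N ≥ 2 be integers, α > 0, c^1,...,c^J ∈ ℝ, and R^1,...,R^J > 0. For each j define f^j : [0,1] → ℝ by f^j(q) = c^j + α·Σ_{k=0}^{N−1} log((k+1)/(N·R^j))·C(N−1,k)·q^k·(1−q)^{N−1−k}. Then there exists exactly one probability vector Q* = (Q^{1*},...,Q^{J*}) (Q^{j*} ≥ 0, Σ_j Q^{j*} = 1) with the property that there exists λ ∈ ℝ such that f^j(Q^{j*}) = λ for every j with Q^{j*} > 0 and f^j(0) ≥ λ for every j with Q^{j*} = 0. (This Q* is the unique symmetric Nash equilibrium of the N-player single-stage traffic routing game with J parallel routes.) -/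
open Finset

lemma bern_hasDerivAt (m : ℕ) (a : ℕ → ℝ) (q : ℝ) :
    HasDerivAt (fun x : ℝ => ∑ k ∈ Finset.range (m+2),
        a k * ((m+1).choose k : ℝ) * x ^ k * (1 - x) ^ (m + 1 - k))
      (((m:ℝ)+1) * ∑ k ∈ Finset.range (m+1),
        (a (k+1) - a k) * (m.choose k : ℝ) * q ^ k * (1 - q) ^ (m - k)) q := by
  have hterm : ∀ k ∈ Finset.range (m+2),
      HasDerivAt (fun x : ℝ => a k * ((m+1).choose k : ℝ) * x ^ k * (1 - x) ^ (m + 1 - k))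
        (a k * ((m+1).choose k : ℝ) * ((k:ℝ) * q ^ (k-1)) * (1 - q) ^ (m + 1 - k)
          - a k * ((m+1).choose k : ℝ) * q ^ k * (((m+1-k : ℕ):ℝ) * (1 - q) ^ (m - k))) q := by
    intro k hk
    have h1 : HasDerivAt (fun x : ℝ => x ^ k) ((k:ℝ) * q ^ (k-1)) q := hasDerivAt_pow k q
    have h2 : HasDerivAt (fun x : ℝ => (1 - x) ^ (m + 1 - k))
        (-(((m+1-k : ℕ):ℝ) * (1 - q) ^ (m + 1 - k - 1))) q := by
      have hin : HasDerivAt (fun x : ℝ => 1 - x) (-1) q := (hasDerivAt_id q).const_sub 1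
      have := (hasDerivAt_pow (m+1-k) (1 - q)).comp q hin
      simpa [mul_comm, Function.comp_def] using this
    have h3 := ((h1.const_mul (a k * ((m+1).choose k : ℝ))).mul h2)
    refine h3.congr_deriv (Eq.symm ?_)
    rcases Nat.lt_or_ge k (m+1) with h | h
    · rw [show m + 1 - k - 1 = m - k from by omega]
      ring
    · have hk2 : k = m + 1 := by simp only [Finset.mem_range] at hk; omega
      subst hk2
      simp
  have hsum := HasDerivAt.fun_sum hterm
  refine hsum.congr_deriv (Eq.symm ?_)
  rw [Finset.sum_sub_distrib]
  have hA : ∑ k ∈ range (m+2), a k * ((m+1).choose k : ℝ) * ((k:ℝ) * q ^ (k-1)) * (1 - q) ^ (m + 1 - k)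
      = ∑ k ∈ range (m+1), a (k+1) * (((m:ℝ)+1) * (m.choose k : ℝ)) * q ^ k * (1 - q) ^ (m - k) := by
    rw [Finset.sum_range_succ']
    simp only [Nat.cast_zero, zero_mul, mul_zero, add_zero, Nat.add_sub_cancel,
      Nat.succ_sub_succ, Nat.cast_add, Nat.cast_one, Nat.sub_zero]
    refine Finset.sum_congr rfl fun k hk => ?_
    have hch : (m+1).choose (k+1) * (k+1) = (m+1) * m.choose k :=
      (Nat.add_one_mul_choose_eq m k).symm
    have hch' : ((m+1).choose (k+1) : ℝ) * ((k:ℝ)+1) = ((m:ℝ)+1) * (m.choose k : ℝ) := by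
      exact_mod_cast congrArg (Nat.cast : ℕ → ℝ) hch
    linear_combination (q ^ k * (1 - q) ^ (m - k) * a (k+1)) * hch'
  have hB : ∑ k ∈ range (m+2), a k * ((m+1).choose k : ℝ) * q ^ k * (((m+1-k : ℕ):ℝ) * (1 - q) ^ (m - k))
      = ∑ k ∈ range (m+1), a k * (((m:ℝ)+1) * (m.choose k : ℝ)) * q ^ k * (1 - q) ^ (m - k) := by
    rw [Finset.sum_range_succ]
    simp only [Nat.sub_self, Nat.cast_zero, zero_mul, mul_zero, add_zero]
    refine Finset.sum_congr rfl fun k hk => ?_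
    simp only [Finset.mem_range] at hk
    have hch : (m+1).choose k * (m + 1 - k) = (m+1) * m.choose k := by
      have h1 : (m+1).choose k = (m+1).choose (m+1-k) := (Nat.choose_symm (by omega)).symm
      have h2 : m + 1 - k = (m - k) + 1 := by omega
      have h3 := Nat.add_one_mul_choose_eq m (m-k)
      rw [Nat.choose_symm (show k ≤ m by omega)] at h3
      rw [h1, h2]
      exact h3.symm
    have hch' : ((m+1).choose k : ℝ) * ((m+1-k : ℕ):ℝ) = ((m:ℝ)+1) * (m.choose k : ℝ) := by
      exact_mod_cast congrArg (Nat.cast : ℕ → ℝ) hch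
    linear_combination (q ^ k * (1 - q) ^ (m - k) * a k) * hch'
  rw [hA, hB, Finset.mul_sum, ← Finset.sum_sub_distrib]
  exact Finset.sum_congr rfl fun k hk => by ring

lemma deriv_nonneg_of_right_min {h : ℝ → ℝ} {d δ : ℝ} (hδ : 0 < δ)
    (hd : HasDerivAt h d 0) (hmin : ∀ ε ∈ Set.Ioc 0 δ, h 0 ≤ h ε) : 0 ≤ d := by
  have hd' : HasDerivWithinAt h d (Set.Ioi 0) 0 := hd.hasDerivWithinAt
  rw [hasDerivWithinAt_iff_tendsto_slope] at hd'
  have hIoi : Set.Ioi (0:ℝ) \ {0} = Set.Ioi 0 := by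
    ext x; simp (config := {contextual := true}) [ne_of_gt]
  rw [hIoi] at hd'
  refine ge_of_tendsto hd' ?_
  filter_upwards [Ioc_mem_nhdsGT_of_mem (Set.mem_Ico.mpr ⟨le_refl 0, hδ⟩)] with x hx
  have h1 := hmin x hx
  rw [slope_def_field]
  have : (0:ℝ) < x - 0 := by linarith [hx.1]
  exact div_nonneg (by linarith) this.le


/-!
STATEMENT 13: For `J ≥ 1`, `N ≥ 2`, `α > 0`, costs `c^j` and reference probabilities
`R^j > 0`, with route cost functions
`f^j(q) = c^j + α Σ_{k=0}^{N−1} log((k+1)/(N R^j)) C(N−1,k) q^k (1−q)^{N−1−k}`,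
there exists exactly one probability vector `Q*` for which there is `λ ∈ ℝ` with
`f^j(Q^{j*}) = λ` whenever `Q^{j*} > 0` and `f^j(0) ≥ λ` whenever `Q^{j*} = 0`
(the unique symmetric Nash equilibrium of the `N`-player single-stage routing game).
-/

theorem stmt_13
    (J N : ℕ) (hJ : 1 ≤ J) (hN : 2 ≤ N)
    (α : ℝ) (hα : 0 < α)
    (c R : Fin J → ℝ) (hR : ∀ j, 0 < R j)
    (f : Fin J → ℝ → ℝ)
    (hf : ∀ j q, f j q = c j +
      α * ∑ k ∈ Finset.range N,
        Real.log (((k : ℝ) + 1) / ((N : ℝ) * R j)) * ((N - 1).choose k : ℝ) *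
          q ^ k * (1 - q) ^ (N - 1 - k)) :
    ∃! Q : Fin J → ℝ, (∀ j, 0 ≤ Q j) ∧ (∑ j, Q j = 1) ∧
      ∃ lam : ℝ, (∀ j, 0 < Q j → f j (Q j) = lam) ∧
                 (∀ j, Q j = 0 → lam ≤ f j 0) := by
  obtain ⟨m, rfl⟩ : ∃ m, N = m + 2 := ⟨N - 2, by omega⟩
  have hf2 : ∀ j, f j = fun q => c j + α * ∑ k ∈ Finset.range (m+2),
      Real.log (((k:ℝ)+1) / (((m:ℝ)+2) * R j)) * ((m+1).choose k : ℝ) * q^k * (1-q)^(m+1-k) := by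
    intro j
    funext q
    rw [hf]
    have h1 : m + 2 - 1 = m + 1 := rfl
    rw [h1]
    push_cast
    rfl
  -- derivative
  have hder : ∀ j q, HasDerivAt (f j)
      (α * (((m:ℝ)+1) * ∑ k ∈ Finset.range (m+1),
        (Real.log ((k:ℝ)+2) - Real.log ((k:ℝ)+1)) * (m.choose k : ℝ) * q^k * (1-q)^(m-k))) q := by
    intro j q
    rw [hf2 j]
    have hb := ((bern_hasDerivAt m
      (fun k => Real.log (((k:ℝ)+1) / (((m:ℝ)+2) * R j))) q).const_mul α).const_add (c j)
    refine hb.congr_deriv ?_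
    congr 1
    refine congrArg _ (Finset.sum_congr rfl fun k hk => ?_)
    have hX : (0:ℝ) < ((m:ℝ)+2) * R j := mul_pos (by positivity) (hR j)
    have e : (((k+1:ℕ):ℝ)+1) = (k:ℝ)+2 := by push_cast; ring
    rw [e, Real.log_div (by positivity) (ne_of_gt hX),
      Real.log_div (by positivity) (ne_of_gt hX)]
    ring
  have hcont : ∀ j, Continuous (f j) :=
    fun j => continuous_iff_continuousAt.mpr fun q => (hder j q).continuousAt
  -- strict monotonicity on [0,1]
  have hmono : ∀ j, StrictMonoOn (f j) (Set.Icc 0 1) := by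
    intro j
    refine strictMonoOn_of_deriv_pos (convex_Icc 0 1) (hcont j).continuousOn ?_
    intro x hx
    rw [interior_Icc] at hx
    rw [(hder j x).deriv]
    have hsum : 0 < ∑ k ∈ Finset.range (m+1),
        (Real.log ((k:ℝ)+2) - Real.log ((k:ℝ)+1)) * (m.choose k : ℝ) * x^k * (1-x)^(m-k) := by
      refine Finset.sum_pos (fun k hk => ?_) ⟨0, Finset.mem_range.mpr (by omega)⟩
      have hlog : 0 < Real.log ((k:ℝ)+2) - Real.log ((k:ℝ)+1) := by
        have := Real.log_lt_log (by positivity : (0:ℝ) < (k:ℝ)+1) (by linarith : (k:ℝ)+1 < (k:ℝ)+2)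
        linarith
      have hch : (0:ℝ) < (m.choose k : ℝ) := by
        simp only [Finset.mem_range] at hk
        exact_mod_cast Nat.choose_pos (by omega)
      have hx1 : (0:ℝ) < x^k := pow_pos hx.1 k
      have hx2 : (0:ℝ) < (1-x)^(m-k) := pow_pos (by linarith [hx.2]) _
      positivity
    positivity
    -- primitive functions
  set F : Fin J → ℝ → ℝ := fun j q => ∫ t in (0:ℝ)..q, f j t with hF
  have hFd : ∀ j q, HasDerivAt (F j) (f j q) q :=
    fun j q => ((hcont j).integral_hasStrictDerivAt 0 q).hasDerivAt
  have hFc : ∀ j, Continuous (F j) :=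
    fun j => continuous_iff_continuousAt.mpr fun q => (hFd j q).continuousAt
  haveI : Nonempty (Fin J) := ⟨⟨0, by omega⟩⟩
  have hΦc : Continuous (fun Q : Fin J → ℝ => ∑ i, F i (Q i)) :=
    continuous_finset_sum _ fun i _ => (hFc i).comp (continuous_apply i)
  have hSne : (stdSimplex ℝ (Fin J)).Nonempty := by
    refine ⟨fun _ => (J:ℝ)⁻¹, fun i => by positivity, ?_⟩
    rw [Finset.sum_const, Finset.card_univ, Fintype.card_fin, nsmul_eq_mul]
    rw [mul_inv_cancel₀ (Nat.cast_ne_zero.mpr (by omega) : (J:ℝ) ≠ 0)]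
  obtain ⟨Q, hQS, hQmin⟩ :=
    (isCompact_stdSimplex ℝ (Fin J)).exists_isMinOn hSne hΦc.continuousOn
  obtain ⟨hQ0, hQ1⟩ := hQS
  -- membership in [0,1]
  have hmem : ∀ (P : Fin J → ℝ), (∀ i, 0 ≤ P i) → (∑ i, P i) = 1 →
      ∀ i, P i ∈ Set.Icc (0:ℝ) 1 := by
    intro P h0 h1 i
    exact ⟨h0 i, by rw [← h1]
                    exact Finset.single_le_sum (fun i _ => h0 i) (Finset.mem_univ i)⟩
  -- KKT condition at the minimizer
  have key : ∀ j k, 0 < Q j → f j (Q j) ≤ f k (Q k) := by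
    intro j k hj
    rcases eq_or_ne j k with rfl | hjk
    · exact le_refl _
    have hkj : k ≠ j := hjk.symm
    have hmin : ∀ ε ∈ Set.Ioc 0 (Q j),
        F j (Q j - 0) + F k (Q k + 0) ≤ F j (Q j - ε) + F k (Q k + ε) := by
      intro ε hε
      set Q' := Function.update (Function.update Q j (Q j - ε)) k (Q k + ε) with hQ'def
      have hQ'j : Q' j = Q j - ε := by
        rw [hQ'def, Function.update_of_ne hjk, Function.update_self]
      have hQ'k : Q' k = Q k + ε := by rw [hQ'def, Function.update_self]
      have hQ'i : ∀ i, i ≠ j → i ≠ k → Q' i = Q i := by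
        intro i hij hik
        rw [hQ'def, Function.update_of_ne hik, Function.update_of_ne hij]
      have hsplit : ∀ (g : Fin J → ℝ),
          ∑ i, g i = g k + (g j + ∑ i ∈ (Finset.univ.erase k).erase j, g i) := by
        intro g
        rw [Finset.add_sum_erase _ g (Finset.mem_erase.mpr ⟨hjk, Finset.mem_univ j⟩),
          Finset.add_sum_erase _ g (Finset.mem_univ k)]
      have hrest : ∀ (g g' : Fin J → ℝ), (∀ i, i ≠ j → i ≠ k → g i = g' i) →
          ∑ i ∈ (Finset.univ.erase k).erase j, g i
            = ∑ i ∈ (Finset.univ.erase k).erase j, g' i := by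
        intro g g' hgg
        refine Finset.sum_congr rfl fun i hi => ?_
        rw [Finset.mem_erase, Finset.mem_erase] at hi
        exact hgg i hi.1 hi.2.1
      have hQ'S : Q' ∈ stdSimplex ℝ (Fin J) := by
        constructor
        · intro i
          rcases eq_or_ne i k with rfl | hik
          · rw [hQ'k]; have := hQ0 i; linarith [hε.1]
          rcases eq_or_ne i j with rfl | hij
          · rw [hQ'j]; linarith [hε.2]
          · rw [hQ'i i hij hik]; exact hQ0 i
        · have e1 := hsplit Q'
          have e2 := hsplit Q
          rw [hrest Q' Q hQ'i] at e1
          rw [hQ'j, hQ'k] at e1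
          show ∑ i, Q' i = 1
          rw [e1]
          linarith
      have hle := isMinOn_iff.mp hQmin Q' hQ'S
      have e1 := hsplit (fun i => F i (Q' i))
      have e2 := hsplit (fun i => F i (Q i))
      rw [hrest (fun i => F i (Q' i)) (fun i => F i (Q i))
        (fun i hij hik => by show F i (Q' i) = F i (Q i); rw [hQ'i i hij hik])] at e1
      rw [hQ'j, hQ'k] at e1
      rw [e1, e2] at hle
      simp only [sub_zero, add_zero]
      linarith
    have hd : HasDerivAt (fun ε : ℝ => F j (Q j - ε) + F k (Q k + ε))
        (f j (Q j - 0) * (-1) + f k (Q k + 0) * 1) 0 := by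
      have hin1 : HasDerivAt (fun ε : ℝ => Q j - ε) (-1) 0 := (hasDerivAt_id 0).const_sub (Q j)
      have hin2 : HasDerivAt (fun ε : ℝ => Q k + ε) 1 0 := (hasDerivAt_id 0).const_add (Q k)
      exact ((hFd j (Q j - 0)).comp 0 hin1).add ((hFd k (Q k + 0)).comp 0 hin2)
    have hnn := deriv_nonneg_of_right_min hj hd hmin
    simp only [sub_zero, add_zero] at hnn
    linarith
  -- the equilibrium value
  obtain ⟨j0, hj0⟩ : ∃ j, 0 < Q j := by
    by_contra hcon
    push_neg at hcon
    have : ∑ i, Q i = 0 :=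
      Finset.sum_eq_zero fun i _ => le_antisymm (hcon i) (hQ0 i)
    rw [hQ1] at this
    norm_num at this
  set lam := f j0 (Q j0) with hlam
  have prop1 : ∀ j, 0 < Q j → f j (Q j) = lam :=
    fun j hjpos => le_antisymm (key j j0 hjpos) (key j0 j hj0)
  have prop2 : ∀ j, Q j = 0 → lam ≤ f j 0 := by
    intro j hj'
    have := key j0 j hj0
    rwa [hj'] at this
  -- uniqueness helpers
  have contr : ∀ (P P' : Fin J → ℝ) (l l' : ℝ),
      (∀ i, 0 ≤ P i) → (∑ i, P i) = 1 →
      (∀ j, 0 < P j → f j (P j) = l) → (∀ j, P j = 0 → l ≤ f j 0) →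
      (∀ i, 0 ≤ P' i) → (∑ i, P' i) = 1 →
      (∀ j, 0 < P' j → f j (P' j) = l') → (∀ j, P' j = 0 → l' ≤ f j 0) →
      l < l' → False := by
    intro P P' l l' h0 h1 hp1 hp2 h0' h1' hp1' hp2' hll
    have hle : ∀ i, P i ≤ P' i := by
      intro i
      rcases (h0' i).eq_or_lt with hz | hpos
      · -- P' i = 0; claim P i = 0
        rcases (h0 i).eq_or_lt with hz2 | hpos2
        · rw [← hz2, ← hz]
        · exfalso
          have hfi : f i (P i) = l := hp1 i hpos2
          have hl' : l' ≤ f i 0 := hp2' i hz.symm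
          have : f i 0 < f i (P i) :=
            hmono i (Set.left_mem_Icc.mpr zero_le_one) (hmem P h0 h1 i) hpos2
          linarith
      · by_contra hgt
        push_neg at hgt
        have hPpos : 0 < P i := hpos.trans hgt
        have hfi : f i (P i) = l := hp1 i hPpos
        have hfi' : f i (P' i) = l' := hp1' i hpos
        have : f i (P' i) < f i (P i) :=
          hmono i (hmem P' h0' h1' i) (hmem P h0 h1 i) hgt
        linarith
    obtain ⟨i0, hi0⟩ : ∃ i, 0 < P' i := by
      by_contra hcon
      push_neg at hcon
      have : ∑ i, P' i = 0 :=
        Finset.sum_eq_zero fun i _ => le_antisymm (hcon i) (h0' i)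
      rw [h1'] at this; norm_num at this
    have hi0lt : P i0 < P' i0 := by
      by_contra hge
      push_neg at hge
      have hPpos : 0 < P i0 := lt_of_lt_of_le hi0 hge
      have hfi : f i0 (P i0) = l := hp1 i0 hPpos
      have hfi' : f i0 (P' i0) = l' := hp1' i0 hi0
      have : f i0 (P' i0) ≤ f i0 (P i0) := by
        rcases hge.eq_or_lt with he | hlt
        · rw [he]
        · exact le_of_lt (hmono i0 (hmem P' h0' h1' i0) (hmem P h0 h1 i0) hlt)
      linarith
    have : ∑ i, P i < ∑ i, P' i :=
      Finset.sum_lt_sum (fun i _ => hle i) ⟨i0, Finset.mem_univ i0, hi0lt⟩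
    rw [h1, h1'] at this
    exact lt_irrefl 1 this
  -- assemble
  refine ⟨Q, ⟨hQ0, hQ1, lam, prop1, prop2⟩, ?_⟩
  rintro Q' ⟨h0', h1', l', hp1', hp2'⟩
  rcases lt_trichotomy l' lam with hlt | heq | hgt
  · exact absurd (contr Q' Q l' lam h0' h1' hp1' hp2' hQ0 hQ1 prop1 prop2 hlt) not_false
  · funext i
    rcases (h0' i).eq_or_lt with hz' | hpos'
    · rcases (hQ0 i).eq_or_lt with hz | hpos
      · rw [← hz', ← hz]
      · exfalso
        have h1 : f i (Q i) = lam := prop1 i hpos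
        have h2 : l' ≤ f i 0 := hp2' i hz'.symm
        have h3 : f i 0 < f i (Q i) :=
          hmono i (Set.left_mem_Icc.mpr zero_le_one) (hmem Q hQ0 hQ1 i) hpos
        rw [heq] at h2
        linarith
    · rcases (hQ0 i).eq_or_lt with hz | hpos
      · exfalso
        have h1 : f i (Q' i) = l' := hp1' i hpos'
        have h2 : lam ≤ f i 0 := prop2 i hz.symm
        have h3 : f i 0 < f i (Q' i) :=
          hmono i (Set.left_mem_Icc.mpr zero_le_one) (hmem Q' h0' h1' i) hpos'
        rw [← heq] at h2
        linarith
      · have h1 : f i (Q' i) = l' := hp1' i hpos'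
        have h2 : f i (Q i) = lam := prop1 i hpos
        have : f i (Q' i) = f i (Q i) := by rw [h1, h2, heq]
        exact (hmono i).injOn (hmem Q' h0' h1' i) (hmem Q hQ0 hQ1 i) this
  · exact absurd (contr Q Q' lam l' hQ0 hQ1 prop1 prop2 h0' h1' hp1' hp2' hgt) not_false
end

section
/- Let J ≥ 1 be an integer and for each j ∈ {1,...,J} let f^j : [0,1] → ℝ be continuous and strictly increasing. Define g^j : ℝ → [0,1] by g^j(λ) = 0 if λ ≤ f^j(0), g^j(λ) = (f^j)^{−1}(λ) if f^j(0) < λ ≤ f^j(1), and g^j(λ) = 1 if λ > f^j(1); set g(λ) = Σ_{j=1}^J g^j(λ). Then: (i) there exists λ ∈ ℝ such that g(λ) = 1; and (ii) if λ₁, λ₂ ∈ ℝ satisfy g(λ₁) = g(λ₂), then g^j(λ₁) = g^j(λ₂) for every j. -/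
/-!
STATEMENT 15: Let `J ≥ 1` and for each `j` let `f^j : [0,1] → ℝ` be continuous and
strictly increasing, and let `g^j` be the clipped inverse: `g^j(λ) = 0` for
`λ ≤ f^j(0)`, `g^j(λ) = (f^j)^{−1}(λ)` for `f^j(0) < λ ≤ f^j(1)`, `g^j(λ) = 1` for
`λ > f^j(1)`; set `g(λ) = Σ_j g^j(λ)`. Then (i) there exists `λ` with `g(λ) = 1`, and
(ii) if `g(λ₁) = g(λ₂)` then `g^j(λ₁) = g^j(λ₂)` for every `j`.
(The middle branch of `g^j` is characterized by `g^j(λ) ∈ [0,1]` and `f^j(g^j(λ)) = λ`,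
which determines it uniquely by strict monotonicity of `f^j`.)
-/

theorem stmt_15
    (J : ℕ) (hJ : 1 ≤ J)
    (f : Fin J → ℝ → ℝ)
    (hfc : ∀ j, ContinuousOn (f j) (Set.Icc 0 1))
    (hfm : ∀ j, StrictMonoOn (f j) (Set.Icc 0 1))
    (g : Fin J → ℝ → ℝ)
    (hg0 : ∀ j lam, lam ≤ f j 0 → g j lam = 0)
    (hgmid : ∀ j lam, f j 0 < lam → lam ≤ f j 1 →
      g j lam ∈ Set.Icc (0 : ℝ) 1 ∧ f j (g j lam) = lam)
    (hg1 : ∀ j lam, f j 1 < lam → g j lam = 1) :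
    (∃ lam : ℝ, ∑ j, g j lam = 1) ∧
    (∀ lam₁ lam₂ : ℝ, (∑ j, g j lam₁) = (∑ j, g j lam₂) →
      ∀ j, g j lam₁ = g j lam₂) := by
  have h0mem : (0 : ℝ) ∈ Set.Icc (0 : ℝ) 1 := by constructor <;> norm_num
  have h1mem : (1 : ℝ) ∈ Set.Icc (0 : ℝ) 1 := by constructor <;> norm_num
  have hf01 : ∀ j, f j 0 < f j 1 := fun j => (hfm j) h0mem h1mem (by norm_num)
  -- every value of g j lies in [0,1]
  have hmem : ∀ j lam, g j lam ∈ Set.Icc (0 : ℝ) 1 := by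
    intro j lam
    rcases le_or_gt lam (f j 0) with h | h
    · rw [hg0 j lam h]; exact h0mem
    · rcases le_or_gt lam (f j 1) with h' | h'
      · exact (hgmid j lam h h').1
      · rw [hg1 j lam h']; exact h1mem
  -- g j (f j y) = y for y ∈ [0,1]
  have hrange : ∀ j (y : ℝ), y ∈ Set.Icc (0 : ℝ) 1 → g j (f j y) = y := by
    intro j y hy
    rcases le_or_gt (f j y) (f j 0) with h | h
    · have hy0 : y ≤ 0 := ((hfm j).le_iff_le hy h0mem).1 h
      have : y = 0 := le_antisymm hy0 hy.1
      rw [this, hg0 j _ le_rfl]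
    · have h' : f j y ≤ f j 1 := ((hfm j).le_iff_le hy h1mem).2 hy.2
      obtain ⟨hm, hfe⟩ := hgmid j (f j y) h h'
      exact (hfm j).injOn hm hy hfe
  -- monotonicity of each g j
  have hmono : ∀ j, Monotone (g j) := by
    intro j a b hab
    rcases le_or_gt a (f j 0) with h | h
    · rw [hg0 j a h]; exact (hmem j b).1
    · rcases le_or_gt a (f j 1) with h' | h'
      · obtain ⟨hma, hfa⟩ := hgmid j a h h'
        rcases le_or_gt b (f j 1) with hb' | hb'
        · obtain ⟨hmb, hfb⟩ := hgmid j b (lt_of_lt_of_le h hab) hb'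
          have : f j (g j a) ≤ f j (g j b) := by rw [hfa, hfb]; exact hab
          exact ((hfm j).le_iff_le hma hmb).1 this
        · rw [hg1 j b hb']; exact (hmem j a).2
      · rw [hg1 j a h', hg1 j b (lt_of_lt_of_le h' hab)]
  -- continuity of each g j
  have hcont : ∀ j, Continuous (g j) := by
    intro j
    set G : ℝ → Set.Icc (0 : ℝ) 1 := fun lam => ⟨g j lam, hmem j lam⟩ with hG
    have hGmono : Monotone G := fun a b hab => by
      simpa [G, Subtype.mk_le_mk] using hmono j hab
    have hGsurj : Function.Surjective G := by
      rintro ⟨y, hy⟩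
      exact ⟨f j y, Subtype.ext (hrange j y hy)⟩
    have : Continuous G := hGmono.continuous_of_surjective hGsurj
    have : Continuous (fun lam => (G lam : ℝ)) := continuous_subtype_val.comp this
    simpa [G] using this
  haveI : Nonempty (Fin J) := Fin.pos_iff_nonempty.1 hJ
  constructor
  · -- existence via IVT
    set S : ℝ → ℝ := fun lam => ∑ j, g j lam with hS
    have hScont : Continuous S := continuous_finset_sum _ fun j _ => hcont j
    set a : ℝ := Finset.univ.inf' Finset.univ_nonempty (fun j => f j 0) with ha
    set b : ℝ := Finset.univ.sup' Finset.univ_nonempty (fun j => f j 1) + 1 with hb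
    have hSa : S a = 0 := by
      apply Finset.sum_eq_zero
      intro j _
      exact hg0 j a (Finset.inf'_le _ (Finset.mem_univ j))
    have hSb : S b = (J : ℝ) := by
      have : ∀ j ∈ Finset.univ, g j b = 1 := by
        intro j _
        refine hg1 j b ?_
        have : f j 1 ≤ Finset.univ.sup' Finset.univ_nonempty (fun j => f j 1) :=
          Finset.le_sup' (f := fun j => f j 1) (Finset.mem_univ j)
        linarith
      show (∑ j, g j b) = (J : ℝ)
      rw [Finset.sum_congr rfl this]
      simp
    have hab : a ≤ b := by
      obtain ⟨j₀⟩ := (inferInstance : Nonempty (Fin J))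
      have h1 : a ≤ f j₀ 0 := Finset.inf'_le _ (Finset.mem_univ j₀)
      have h2 : f j₀ 1 ≤ Finset.univ.sup' Finset.univ_nonempty (fun j => f j 1) :=
        Finset.le_sup' (f := fun j => f j 1) (Finset.mem_univ j₀)
      have := (hf01 j₀).le
      linarith
    have key := intermediate_value_Icc hab hScont.continuousOn
    have h1in : (1 : ℝ) ∈ Set.Icc (S a) (S b) := by
      rw [hSa, hSb]
      constructor
      · norm_num
      · exact_mod_cast Nat.one_le_cast.mpr hJ
    obtain ⟨lam, _, hlam⟩ := key h1in
    exact ⟨lam, hlam⟩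
  · -- uniqueness of the components
    have key : ∀ a b : ℝ, a ≤ b → (∑ j, g j a) = (∑ j, g j b) → ∀ j, g j a = g j b := by
      intro a b hab hsum j
      have hle : ∀ i ∈ Finset.univ, g i a ≤ g i b := fun i _ => hmono i hab
      exact (Finset.sum_eq_sum_iff_of_le hle).1 hsum j (Finset.mem_univ j)
    intro lam₁ lam₂ hsum j
    rcases le_total lam₁ lam₂ with h | h
    · exact key lam₁ lam₂ h hsum j
    · exact (key lam₂ lam₁ h hsum.symm j).symm
end
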